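/- arXiv:2407.17159 — 2 statements merged into one kernel-verified Lean document; each statement's English description precedes it below -/
import Mathlib

section
/- Let f = (f_n)_{n=0}^M be a sequence in X with f_0 + f_1 + ⋯ + f_M = 0. Then for every integer m with 1 ≤ m ≤ M−1 and every 0 ≤ n ≤ M, ‖f_n‖ ≤ c_A · c_m^{1/2} · ‖f‖_0^{1−1/(2m)} · ‖D^1 f‖_{m−1}^{1/(2m)}, where c_1 = 1. -/
/-!
Zero mean gives the discrete Poincaré inequality `‖f‖₀² ≤ ((M+1)τ)² ‖D¹f‖₀² / 2`, because
`∑ₙ ∑ₖ ‖fₙ - fₖ‖² = 2 (M+1) ∑ₙ ‖fₙ‖²` and each `‖fₙ - fₖ‖² ≤ Mτ ‖D¹f‖₀²`. Combined with the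
local bound `‖gₙ‖² ≤ ‖g‖₀² / ((M+1-s)τ) + 2 ‖g‖₀ ‖Dg‖₀` on `[s, M]` (compare `‖gₙ‖²` with its
average) this is the Agmon inequality `‖fₙ‖² ≤ c_A² ‖f‖₀ ‖D¹f‖₀`.

For the interpolation part write `aᵣ = ‖Dʳf‖₀` and `κ = c_{B,1}/√2 ≥ 6`. Summation by parts bounds
`a_{r+1}²` by `aᵣ a_{r+2}` plus two boundary terms, which the local bound controls; the outcome
is that `a_{r+1} T_{r+1} ≤ κ² aᵣ` or `a_{r+1}² ≤ κ² aᵣ a_{r+2}`. Either way an induction on `m`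
gives `a₁ᵐ ≤ κ^{m(m-1)} a₀^{m-1} ‖D¹f‖_{m-1}`, and `κ^{m-1} ≤ c_m` since `ĉⱼ` and `d̂ⱼ` grow at
least like `κ^{j+1}`.
-/

noncomputable def cA : ℝ := Real.sqrt (2 + Real.sqrt 2 / 2)
noncomputable def cA1 : ℝ := (1 + (Real.sqrt 2 * cA) ^ ((4:ℝ)/3)) ^ ((3:ℝ)/4)
noncomputable def cB1 : ℝ := 2 * Real.sqrt (1 + 2 * (cA * cA1)^2)

/-- `dAux j = (d̂_j, ∏_{i≤j} d̂_i^{1/(i+1)})`, realizing the recursion (4.20). -/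
noncomputable def dAux : ℕ → ℝ × ℝ
  | 0 => (cB1, cB1)
  | (j+1) =>
      let d : ℝ := (1 + (dAux j).1 ^ (2*((j:ℝ)+2))) ^ (((j:ℝ)+2) / (2*((j:ℝ)+1)*((j:ℝ)+3))) *
                   ((dAux j).2) ^ (((j:ℝ)+2) / (((j:ℝ)+1)*((j:ℝ)+3)))
      (d, (dAux j).2 * d ^ (1/((j:ℝ)+2)))

noncomputable def dHat (j : ℕ) : ℝ := (dAux j).1

/-- `cAux j = (ĉ_j, ∏_{i≤j} ĉ_i^{1/(i+1)})`, realizing the recursion (4.19). -/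
noncomputable def cAux : ℕ → ℝ × ℝ
  | 0 => (cB1 / Real.sqrt 2, cB1 / Real.sqrt 2)
  | (j+1) =>
      let c : ℝ := (1 + dHat j ^ (2*((j:ℝ)+2))) ^ (((j:ℝ)+2) / (2*((j:ℝ)+1)*((j:ℝ)+3))) *
                   ((cAux j).2) ^ (((j:ℝ)+2) / (((j:ℝ)+1)*((j:ℝ)+3)))
      (c, (cAux j).2 * c ^ (1/((j:ℝ)+2)))

noncomputable def cHat (j : ℕ) : ℝ := (cAux j).1

/-- the constant `c_m = ∏_{j=0}^{m-2} ĉ_j^{1/(j+1)}` (equal to `1` for `m = 1`). -/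
noncomputable def cConst (m : ℕ) : ℝ := ∏ j ∈ Finset.range (m-1), cHat j ^ (1/((j:ℝ)+1))

/-- backward difference quotient of a sequence. -/
noncomputable def Dq {X : Type*} [NormedAddCommGroup X] [NormedSpace ℝ X] (τ : ℝ) (f : ℕ → X) : ℕ → X :=
  fun n => τ⁻¹ • (f n - f (n - 1))

/-- discrete `L²` norm `(τ Σ_{n=a}^{b} ‖f n‖²)^{1/2}`. -/
noncomputable def seqNorm0 {X : Type*} [NormedAddCommGroup X]
    (τ : ℝ) (a b : ℕ) (f : ℕ → X) : ℝ :=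
  Real.sqrt (τ * ∑ n ∈ Finset.Icc a b, ‖f n‖^2)

/-- `T_0 = T` and `T_j = (M+1−j)τ` for `j ≥ 1`. -/
noncomputable def Tk (τ T : ℝ) (M j : ℕ) : ℝ := if j = 0 then T else ((M:ℝ) + 1 - (j:ℝ)) * τ

/-- the scale-invariant norm `‖Dᵏf‖_m = (Σ_{j=k}^{k+m} T_j^{−2(m+k−j)} ‖Dʲf‖₀²)^{1/2}`. -/
noncomputable def normm {X : Type*} [NormedAddCommGroup X] [NormedSpace ℝ X]
    (τ T : ℝ) (M k m : ℕ) (f : ℕ → X) : ℝ :=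
  Real.sqrt (∑ j ∈ Finset.Icc k (k+m),
    (seqNorm0 τ j M ((Dq τ)^[j] f))^2 / (Tk τ T M j)^(2*(m+k-j)))

lemma cA_sq : cA ^ 2 = 2 + Real.sqrt 2 / 2 :=
  Real.sq_sqrt (by positivity)

lemma sqrt_two_mul_cA_le_cA1 : Real.sqrt 2 * cA ≤ cA1 := by
  have hx : 0 ≤ Real.sqrt 2 * cA := mul_nonneg (Real.sqrt_nonneg _) (Real.sqrt_nonneg _)
  calc Real.sqrt 2 * cA = ((Real.sqrt 2 * cA) ^ ((4:ℝ)/3)) ^ ((3:ℝ)/4) := by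
        rw [← Real.rpow_mul hx]; norm_num
    _ ≤ cA1 := Real.rpow_le_rpow (by positivity) (by linarith) (by norm_num)

lemma six_le_cB1_div_sqrt_two : 6 ≤ cB1 / Real.sqrt 2 := by
  have hcA : 5 / 2 ≤ cA ^ 2 := by rw [cA_sq]; linarith [Real.one_lt_sqrt_two]
  have hcA1 : 2 * cA ^ 2 ≤ cA1 ^ 2 := by
    have h := pow_le_pow_left₀ (mul_nonneg (Real.sqrt_nonneg 2) (Real.sqrt_nonneg _))
      sqrt_two_mul_cA_le_cA1 2
    rwa [mul_pow, Real.sq_sqrt zero_le_two] at h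
  have hsq : (cB1 / Real.sqrt 2) ^ 2 = 2 + 4 * (cA ^ 2 * cA1 ^ 2) := by
    rw [cB1, div_pow, mul_pow, Real.sq_sqrt (by positivity), Real.sq_sqrt zero_le_two]
    ring
  have h36 : 6 ^ 2 ≤ (cB1 / Real.sqrt 2) ^ 2 := by
    rw [hsq]; nlinarith
  exact le_of_pow_le_pow_left₀ two_ne_zero (by rw [cB1]; positivity) h36

lemma rpow_add_two_le_recursion {q D P x : ℝ} (hq : 0 < q) (hx : 0 ≤ x)
    (hD : q ^ (x + 1) ≤ D) (hP : q ^ (x + 1) ≤ P) :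
    q ^ (x + 2) ≤ (1 + D ^ (2 * (x + 2))) ^ ((x + 2) / (2 * (x + 1) * (x + 3))) *
      P ^ ((x + 2) / ((x + 1) * (x + 3))) := by
  set e₁ := (x + 2) / (2 * (x + 1) * (x + 3))
  set e₂ := (x + 2) / ((x + 1) * (x + 3))
  have hq' : 0 ≤ q ^ (x + 1) := Real.rpow_nonneg hq.le _
  have hD' : (q ^ (x + 1)) ^ (2 * (x + 2)) ≤ 1 + D ^ (2 * (x + 2)) := by
    have := Real.rpow_le_rpow hq' hD (by positivity : 0 ≤ 2 * (x + 2))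
    linarith [Real.rpow_nonneg (hq'.trans hD) (2 * (x + 2))]
  have hexp : (x + 1) * (2 * (x + 2)) * e₁ + (x + 1) * e₂ = x + 2 := by
    simp only [e₁, e₂]; field_simp; ring
  calc q ^ (x + 2) = ((q ^ (x + 1)) ^ (2 * (x + 2))) ^ e₁ * (q ^ (x + 1)) ^ e₂ := by
        rw [← Real.rpow_mul hq.le, ← Real.rpow_mul hq.le, ← Real.rpow_mul hq.le,
          ← Real.rpow_add hq, hexp]
    _ ≤ (1 + D ^ (2 * (x + 2))) ^ e₁ * P ^ e₂ := by
        have he₁ : 0 ≤ e₁ := by positivity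
        have he₂ : 0 ≤ e₂ := by positivity
        gcongr
        exact Real.rpow_nonneg ((Real.rpow_nonneg hq' _).trans hD') _

lemma rpow_add_two_le_mul_rpow {q P d x : ℝ} (hq : 0 < q) (hx : 0 ≤ x)
    (hP : q ^ (x + 1) ≤ P) (hd : q ^ (x + 2) ≤ d) :
    q ^ (x + 2) ≤ P * d ^ (1 / (x + 2)) := by
  have hd' : q ≤ d ^ (1 / (x + 2)) := by
    calc q = (q ^ (x + 2)) ^ (1 / (x + 2)) := by
          rw [← Real.rpow_mul hq.le, mul_one_div_cancel (by positivity), Real.rpow_one]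
      _ ≤ d ^ (1 / (x + 2)) := Real.rpow_le_rpow (by positivity) hd (by positivity)
  calc q ^ (x + 2) = q ^ (x + 1) * q := by rw [← Real.rpow_add_one hq.ne']; ring_nf
    _ ≤ P * d ^ (1 / (x + 2)) := mul_le_mul hP hd' hq.le ((Real.rpow_nonneg hq.le _).trans hP)

lemma rpow_le_dAux {q : ℝ} (hq : 0 < q) (hqB : q ≤ cB1) (j : ℕ) :
    q ^ ((j:ℝ) + 1) ≤ (dAux j).1 ∧ q ^ ((j:ℝ) + 1) ≤ (dAux j).2 := by
  induction j with
  | zero => simpa [dAux] using hqB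
  | succ j ih =>
    have hd := rpow_add_two_le_recursion hq j.cast_nonneg ih.1 ih.2
    rw [Nat.cast_succ, add_assoc, one_add_one_eq_two]
    exact ⟨hd, rpow_add_two_le_mul_rpow hq j.cast_nonneg ih.2 hd⟩

lemma rpow_le_cAux {q : ℝ} (hq : 0 < q) (hqB : q ≤ cB1 / Real.sqrt 2) (j : ℕ) :
    q ^ ((j:ℝ) + 1) ≤ (cAux j).1 ∧ q ^ ((j:ℝ) + 1) ≤ (cAux j).2 := by
  induction j with
  | zero => simpa [cAux] using hqB
  | succ j ih =>
    have hqB' : q ≤ cB1 := hqB.trans (div_le_self (by rw [cB1]; positivity)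
      Real.one_lt_sqrt_two.le)
    have hc := rpow_add_two_le_recursion hq j.cast_nonneg (rpow_le_dAux hq hqB' j).1 ih.2
    rw [Nat.cast_succ, add_assoc, one_add_one_eq_two]
    exact ⟨hc, rpow_add_two_le_mul_rpow hq j.cast_nonneg ih.2 hc⟩

lemma cConst_add_two (j : ℕ) : cConst (j + 2) = (cAux j).2 := by
  induction j with
  | zero => simp [cConst, cAux, cHat]
  | succ j ih =>
    simp only [cConst, show j + 1 + 2 - 1 = j + 2 by omega, show j + 2 - 1 = j + 1 by omega]
      at ih ⊢
    rw [Finset.prod_range_succ, ih, cHat,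
      show ((j + 1 : ℕ) : ℝ) + 1 = (j : ℝ) + 2 by push_cast; ring]
    rfl

lemma pow_le_cConst {q : ℝ} (hq : 0 < q) (hqB : q ≤ cB1 / Real.sqrt 2) {m : ℕ} (hm : 1 ≤ m) :
    q ^ (m - 1) ≤ cConst m := by
  rcases m with _ | _ | j
  · omega
  · simp [cConst]
  · rw [cConst_add_two, show j + 2 - 1 = j + 1 by omega, ← Real.rpow_natCast]
    exact_mod_cast (rpow_le_cAux hq hqB j).2

lemma norm_sub_le_sum_Icc_norm_sub {E : Type*} [SeminormedAddCommGroup E] (f : ℕ → E)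
    {s M p q : ℕ} (hp : p ∈ Finset.Icc s M) (hq : q ∈ Finset.Icc s M) :
    ‖f q - f p‖ ≤ ∑ j ∈ Finset.Icc (s + 1) M, ‖f j - f (j - 1)‖ := by
  wlog hpq : p ≤ q generalizing p q
  · rw [norm_sub_rev]; exact this hq hp (le_of_not_ge hpq)
  have htele : ∀ r, p ≤ r → ‖f r - f p‖ ≤ ∑ j ∈ Finset.Icc (p + 1) r, ‖f j - f (j - 1)‖ := by
    intro r hr
    induction r, hr using Nat.le_induction with
    | base => simp
    | succ r hpr ih =>
      rw [Finset.sum_Icc_succ_top (by omega), Nat.add_sub_cancel]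
      calc ‖f (r + 1) - f p‖ = ‖(f r - f p) + (f (r + 1) - f r)‖ := by abel_nf
        _ ≤ _ := (norm_add_le _ _).trans (by gcongr)
  simp only [Finset.mem_Icc] at hp hq
  refine (htele q hpq).trans (Finset.sum_le_sum_of_subset_of_nonneg ?_ fun _ _ _ => norm_nonneg _)
  exact Finset.Icc_subset_Icc (by omega) hq.2

section SeqNorm

variable {X : Type*} [NormedAddCommGroup X] {τ : ℝ}

lemma seqNorm0_nonneg (a b : ℕ) (g : ℕ → X) : 0 ≤ seqNorm0 τ a b g :=
  Real.sqrt_nonneg _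

lemma seqNorm0_sq (hτ : 0 ≤ τ) (a b : ℕ) (g : ℕ → X) :
    seqNorm0 τ a b g ^ 2 = τ * ∑ n ∈ Finset.Icc a b, ‖g n‖ ^ 2 :=
  Real.sq_sqrt (by positivity)

lemma seqNorm0_anti (hτ : 0 ≤ τ) {a a' b b' : ℕ} (ha : a ≤ a') (hb : b' ≤ b) (g : ℕ → X) :
    seqNorm0 τ a' b' g ≤ seqNorm0 τ a b g := by
  refine Real.sqrt_le_sqrt (mul_le_mul_of_nonneg_left ?_ hτ)
  exact Finset.sum_le_sum_of_subset_of_nonneg (Finset.Icc_subset_Icc ha hb) fun _ _ _ => by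
    positivity

lemma seqNorm0_comp_pred_le (hτ : 0 ≤ τ) (a b : ℕ) (g : ℕ → X) :
    seqNorm0 τ (a + 1) b (fun n => g (n - 1)) ≤ seqNorm0 τ a b g := by
  refine Real.sqrt_le_sqrt (mul_le_mul_of_nonneg_left ?_ hτ)
  have hinj : Set.InjOn (· - 1) (Finset.Icc (a + 1) b : Set ℕ) := by
    intro x hx y hy hxy
    simp only [Finset.coe_Icc, Set.mem_Icc] at hx hy hxy
    omega
  rw [← Finset.sum_image (f := fun n => ‖g n‖ ^ 2) hinj]
  refine Finset.sum_le_sum_of_subset_of_nonneg ?_ fun _ _ _ => by positivity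
  intro n hn
  simp only [Finset.mem_image, Finset.mem_Icc] at hn ⊢
  omega

lemma mul_sum_norm_mul_norm_le_seqNorm0_mul {Y : Type*} [NormedAddCommGroup Y] (hτ : 0 ≤ τ)
    (a b : ℕ) (g : ℕ → X) (h : ℕ → Y) :
    τ * ∑ n ∈ Finset.Icc a b, ‖g n‖ * ‖h n‖ ≤ seqNorm0 τ a b g * seqNorm0 τ a b h := by
  calc τ * ∑ n ∈ Finset.Icc a b, ‖g n‖ * ‖h n‖
      ≤ τ * (√(∑ n ∈ Finset.Icc a b, ‖g n‖ ^ 2) * √(∑ n ∈ Finset.Icc a b, ‖h n‖ ^ 2)) :=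
        mul_le_mul_of_nonneg_left (Real.sum_mul_le_sqrt_mul_sqrt _ _ _) hτ
    _ = seqNorm0 τ a b g * seqNorm0 τ a b h := by
        rw [seqNorm0, seqNorm0, Real.sqrt_mul hτ, Real.sqrt_mul hτ, mul_mul_mul_comm,
          Real.mul_self_sqrt hτ]

end SeqNorm

section NormedSpace

variable {X : Type*} [NormedAddCommGroup X] [NormedSpace ℝ X] {τ : ℝ}

lemma sub_pred_eq_smul_Dq (hτ : τ ≠ 0) (g : ℕ → X) (n : ℕ) :
    g n - g (n - 1) = τ • Dq τ g n := by
  rw [Dq, smul_smul, mul_inv_cancel₀ hτ, one_smul]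

lemma norm_sub_pred_eq_mul_norm_Dq (hτ : 0 < τ) (g : ℕ → X) (n : ℕ) :
    ‖g n - g (n - 1)‖ = τ * ‖Dq τ g n‖ := by
  rw [sub_pred_eq_smul_Dq hτ.ne', norm_smul, Real.norm_of_nonneg hτ.le]

lemma sq_norm_le_seqNorm0 (hτ : 0 < τ) (g : ℕ → X) {s M n : ℕ} (hn : n ∈ Finset.Icc s M) :
    ‖g n‖ ^ 2 ≤ seqNorm0 τ s M g ^ 2 / (((M:ℝ) + 1 - s) * τ)
      + 2 * seqNorm0 τ s M g * seqNorm0 τ (s + 1) M (Dq τ g) := by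
  set A₀ := seqNorm0 τ s M g
  set A₁ := seqNorm0 τ (s + 1) M (Dq τ g)
  have hsM : s ≤ M := (Finset.mem_Icc.1 hn).1.trans (Finset.mem_Icc.1 hn).2
  have hN : 0 < (M:ℝ) + 1 - s := by
    have : (s:ℝ) ≤ M := by exact_mod_cast hsM
    linarith
  obtain ⟨k, hk, hk_avg⟩ : ∃ k ∈ Finset.Icc s M, ‖g k‖ ^ 2 ≤ A₀ ^ 2 / (((M:ℝ) + 1 - s) * τ) := by
    refine Finset.exists_le_of_sum_le ⟨s, Finset.mem_Icc.2 ⟨le_rfl, hsM⟩⟩ (le_of_eq ?_)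
    rw [Finset.sum_const, Nat.card_Icc, nsmul_eq_mul, seqNorm0_sq hτ.le,
      Nat.cast_sub (by omega), Nat.cast_add_one]
    field_simp
  have hstep : ∀ j, ‖‖g j‖ ^ 2 - ‖g (j - 1)‖ ^ 2‖ ≤
      τ * (‖g j‖ * ‖Dq τ g j‖) + τ * (‖g (j - 1)‖ * ‖Dq τ g j‖) := by
    intro j
    rw [Real.norm_eq_abs, sq_sub_sq, abs_mul, abs_of_nonneg (by positivity : 0 ≤ ‖g j‖ + _)]
    calc (‖g j‖ + ‖g (j - 1)‖) * |‖g j‖ - ‖g (j - 1)‖|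
        ≤ (‖g j‖ + ‖g (j - 1)‖) * ‖g j - g (j - 1)‖ := by
          gcongr; exact abs_norm_sub_norm_le _ _
      _ = τ * (‖g j‖ * ‖Dq τ g j‖) + τ * (‖g (j - 1)‖ * ‖Dq τ g j‖) := by
          rw [norm_sub_pred_eq_mul_norm_Dq hτ]; ring
  have hosc : ‖g n‖ ^ 2 - ‖g k‖ ^ 2 ≤ 2 * A₀ * A₁ := by
    calc ‖g n‖ ^ 2 - ‖g k‖ ^ 2 ≤ ‖‖g n‖ ^ 2 - ‖g k‖ ^ 2‖ := Real.le_norm_self _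
      _ ≤ ∑ j ∈ Finset.Icc (s + 1) M, ‖‖g j‖ ^ 2 - ‖g (j - 1)‖ ^ 2‖ :=
          norm_sub_le_sum_Icc_norm_sub (fun j => ‖g j‖ ^ 2) hk hn
      _ ≤ τ * ∑ j ∈ Finset.Icc (s + 1) M, ‖g j‖ * ‖Dq τ g j‖
          + τ * ∑ j ∈ Finset.Icc (s + 1) M, ‖g (j - 1)‖ * ‖Dq τ g j‖ := by
          rw [Finset.mul_sum, Finset.mul_sum, ← Finset.sum_add_distrib]
          exact Finset.sum_le_sum fun j _ => hstep j
      _ ≤ seqNorm0 τ (s + 1) M g * A₁ + seqNorm0 τ (s + 1) M (fun j => g (j - 1)) * A₁ :=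
          add_le_add (mul_sum_norm_mul_norm_le_seqNorm0_mul hτ.le _ _ _ _)
            (mul_sum_norm_mul_norm_le_seqNorm0_mul hτ.le _ _ (fun j => g (j - 1)) _)
      _ ≤ A₀ * A₁ + A₀ * A₁ := by
          gcongr
          · exact seqNorm0_nonneg _ _ _
          · exact seqNorm0_anti hτ.le le_self_add le_rfl g
          · exact seqNorm0_nonneg _ _ _
          · exact seqNorm0_comp_pred_le hτ.le s M g
      _ = 2 * A₀ * A₁ := by ring
  linarith

lemma sq_norm_sub_le_seqNorm0 (hτ : 0 < τ) (g : ℕ → X) {s M p q : ℕ}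
    (hp : p ∈ Finset.Icc s M) (hq : q ∈ Finset.Icc s M) :
    ‖g q - g p‖ ^ 2 ≤ ((M:ℝ) - s) * τ * seqNorm0 τ (s + 1) M (Dq τ g) ^ 2 := by
  have hsM : s ≤ M := (Finset.mem_Icc.1 hp).1.trans (Finset.mem_Icc.1 hp).2
  have hcard : ((Finset.Icc (s + 1) M).card : ℝ) = (M:ℝ) - s := by
    rw [Nat.card_Icc, Nat.cast_sub (by omega)]; push_cast; ring
  calc ‖g q - g p‖ ^ 2 ≤ (∑ j ∈ Finset.Icc (s + 1) M, τ * ‖Dq τ g j‖) ^ 2 := by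
        gcongr
        simpa only [norm_sub_pred_eq_mul_norm_Dq hτ] using norm_sub_le_sum_Icc_norm_sub g hp hq
    _ ≤ ((M:ℝ) - s) * ∑ j ∈ Finset.Icc (s + 1) M, (τ * ‖Dq τ g j‖) ^ 2 := by
        rw [← hcard]; exact sq_sum_le_card_mul_sum_sq
    _ = ((M:ℝ) - s) * τ * seqNorm0 τ (s + 1) M (Dq τ g) ^ 2 := by
        simp only [mul_pow, ← Finset.mul_sum]
        rw [seqNorm0_sq hτ.le]
        ring

end NormedSpace

lemma le_or_sq_le_of_sq_le_add {κ T u a₀ a₂ p q : ℝ} (hκ : 6 ≤ κ) (hT : 0 < T) (hu : 0 ≤ u)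
    (ha₀ : 0 ≤ a₀) (ha₂ : 0 ≤ a₂)
    (hp : p ^ 2 ≤ (a₀ ^ 2 / T + 2 * a₀ * u) * (u ^ 2 / T + 2 * u * a₂))
    (hq : q ^ 2 ≤ (a₀ ^ 2 / T + 2 * a₀ * u) * (u ^ 2 / T + 2 * u * a₂))
    (h : u ^ 2 ≤ p + q + a₀ * a₂) :
    u * T ≤ κ ^ 2 * a₀ ∨ u ^ 2 ≤ κ ^ 2 * (a₀ * a₂) := by
  -- If both alternatives fail, `a₀ / T < u / κ²` and `a₀ a₂ < u² / κ²` bound the right side of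
  -- `h` by `(5/6 + 1/36) u²`.
  by_contra! ⟨h₁, h₂⟩
  have hK : 36 ≤ κ ^ 2 := by nlinarith
  have hK₀ : 0 < κ ^ 2 := by positivity
  have hα : a₀ / T ≤ u / κ ^ 2 := by rw [div_le_div_iff₀ hT hK₀]; linarith
  have hβ : a₀ * a₂ ≤ u ^ 2 / κ ^ 2 := by rw [le_div_iff₀ hK₀]; linarith
  have hXY : (a₀ ^ 2 / T + 2 * a₀ * u) * (u ^ 2 / T + 2 * u * a₂) ≤ (5 / 12 * u ^ 2) ^ 2 := by
    calc (a₀ ^ 2 / T + 2 * a₀ * u) * (u ^ 2 / T + 2 * u * a₂)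
        = u * (a₀ / T + 2 * u) * (u * (a₀ / T) + 2 * (a₀ * a₂)) := by field_simp
      _ ≤ u * (u / κ ^ 2 + 2 * u) * (u * (u / κ ^ 2) + 2 * (u ^ 2 / κ ^ 2)) := by
          gcongr
      _ = u ^ 4 * ((1 / κ ^ 2 + 2) * (3 / κ ^ 2)) := by ring
      _ ≤ u ^ 4 * ((1 / 36 + 2) * (3 / 36)) := by gcongr
      _ ≤ (5 / 12 * u ^ 2) ^ 2 := by nlinarith [pow_nonneg hu 4]
  have h512 : 0 ≤ 5 / 12 * u ^ 2 := by positivity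
  have hp' : p ≤ 5 / 12 * u ^ 2 := (le_abs_self p).trans (abs_le_of_sq_le_sq (hp.trans hXY) h512)
  have hq' : q ≤ 5 / 12 * u ^ 2 := (le_abs_self q).trans (abs_le_of_sq_le_sq (hq.trans hXY) h512)
  have hβ' : u ^ 2 / κ ^ 2 ≤ u ^ 2 / 36 := by gcongr
  linarith [mul_nonneg hK₀.le (mul_nonneg ha₀ ha₂)]

section InnerProductSpace

open scoped InnerProductSpace

variable {X : Type*} [NormedAddCommGroup X] [InnerProductSpace ℝ X] {τ : ℝ}

lemma sum_sum_norm_sub_sq {ι : Type*} (s : Finset ι) (f : ι → X) :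
    ∑ i ∈ s, ∑ j ∈ s, ‖f i - f j‖ ^ 2 =
      2 * s.card * ∑ i ∈ s, ‖f i‖ ^ 2 - 2 * ‖∑ i ∈ s, f i‖ ^ 2 := by
  simp only [norm_sub_sq_real, Finset.sum_add_distrib, Finset.sum_sub_distrib, Finset.sum_const,
    ← Finset.mul_sum, ← inner_sum, ← sum_inner, real_inner_self_eq_norm_sq, nsmul_eq_mul]
  ring

lemma seqNorm0_sq_le_of_sum_eq_zero (hτ : 0 < τ) {M : ℕ} (f : ℕ → X)
    (hmean : ∑ n ∈ Finset.range (M + 1), f n = 0) :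
    seqNorm0 τ 0 M f ^ 2 ≤ (((M:ℝ) + 1) * τ) ^ 2 / 2 * seqNorm0 τ 1 M (Dq τ f) ^ 2 := by
  set a := seqNorm0 τ 1 M (Dq τ f)
  have hosc : ∀ n ∈ Finset.range (M + 1), ∀ k ∈ Finset.range (M + 1),
      ‖f n - f k‖ ^ 2 ≤ M * τ * a ^ 2 := by
    intro n hn k hk
    rw [Nat.range_succ_eq_Icc_zero] at hn hk
    simpa using sq_norm_sub_le_seqNorm0 hτ f hk hn
  have hdouble := sum_sum_norm_sub_sq (Finset.range (M + 1)) f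
  rw [hmean, norm_zero, Finset.card_range] at hdouble
  have hbound : ∑ n ∈ Finset.range (M + 1), ∑ k ∈ Finset.range (M + 1), ‖f n - f k‖ ^ 2
      ≤ ((M:ℝ) + 1) ^ 2 * (M * τ * a ^ 2) := by
    calc _ ≤ ∑ n ∈ Finset.range (M + 1), ∑ k ∈ Finset.range (M + 1), (M * τ * a ^ 2) :=
          Finset.sum_le_sum fun n hn => Finset.sum_le_sum fun k hk => hosc n hn k hk
      _ = ((M:ℝ) + 1) ^ 2 * (M * τ * a ^ 2) := by simp; ring
  rw [seqNorm0_sq hτ.le, ← Nat.range_succ_eq_Icc_zero]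
  push_cast at hdouble
  have hMa : (M:ℝ) * (τ * a ^ 2) ≤ ((M:ℝ) + 1) * (τ * a ^ 2) := by gcongr; linarith
  nlinarith

lemma sq_norm_le_cA_sq_mul_of_sum_eq_zero (hτ : 0 < τ) {M : ℕ} (f : ℕ → X)
    (hmean : ∑ n ∈ Finset.range (M + 1), f n = 0) {n : ℕ} (hn : n ≤ M) :
    ‖f n‖ ^ 2 ≤ cA ^ 2 * (seqNorm0 τ 0 M f * seqNorm0 τ 1 M (Dq τ f)) := by
  set A := seqNorm0 τ 0 M f
  set a := seqNorm0 τ 1 M (Dq τ f)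
  have hA : 0 ≤ A := seqNorm0_nonneg _ _ _
  have ha : 0 ≤ a := seqNorm0_nonneg _ _ _
  have hL : 0 < ((M:ℝ) + 1) * τ := by positivity
  have hpoinc : A ≤ ((M:ℝ) + 1) * τ * a * (Real.sqrt 2 / 2) := by
    refine le_of_pow_le_pow_left₀ two_ne_zero (by positivity) ?_
    calc A ^ 2 ≤ (((M:ℝ) + 1) * τ) ^ 2 / 2 * a ^ 2 := seqNorm0_sq_le_of_sum_eq_zero hτ f hmean
      _ = (((M:ℝ) + 1) * τ * a * (Real.sqrt 2 / 2)) ^ 2 := by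
          rw [mul_pow _ (Real.sqrt 2 / 2), div_pow, Real.sq_sqrt zero_le_two]; ring
  have hfirst : A ^ 2 / (((M:ℝ) + 1) * τ) ≤ Real.sqrt 2 / 2 * (A * a) := by
    rw [div_le_iff₀ hL]
    nlinarith
  have hloc := sq_norm_le_seqNorm0 hτ f (s := 0) (Finset.mem_Icc.2 ⟨n.zero_le, hn⟩)
  rw [Nat.cast_zero, sub_zero] at hloc
  rw [cA_sq]
  linarith

lemma sum_inner_sub_pred_eq {E : Type*} [NormedAddCommGroup E] [InnerProductSpace ℝ E]
    (g h : ℕ → E) {s M : ℕ} (hsM : s + 1 ≤ M) :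
    ∑ n ∈ Finset.Icc (s + 1) M, ⟪g n - g (n - 1), h n⟫_ℝ =
      ⟪g M, h M⟫_ℝ - ⟪g s, h (s + 1)⟫_ℝ -
        ∑ n ∈ Finset.Icc (s + 2) M, ⟪g (n - 1), h n - h (n - 1)⟫_ℝ := by
  induction M, hsM using Nat.le_induction with
  | base => simp [inner_sub_left]
  | succ M hsM ih =>
    rw [Finset.sum_Icc_succ_top (by omega), Finset.sum_Icc_succ_top (by omega), ih,
      Nat.add_sub_cancel]
    simp only [inner_sub_left, inner_sub_right]
    ring

lemma seqNorm0_Dq_sq_le (hτ : 0 < τ) (g : ℕ → X) {s M : ℕ} (hsM : s + 1 ≤ M) :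
    seqNorm0 τ (s + 1) M (Dq τ g) ^ 2 ≤ ‖g M‖ * ‖Dq τ g M‖ + ‖g s‖ * ‖Dq τ g (s + 1)‖
      + seqNorm0 τ s M g * seqNorm0 τ (s + 2) M (Dq τ (Dq τ g)) := by
  have hparts := sum_inner_sub_pred_eq g (Dq τ g) hsM
  simp only [sub_pred_eq_smul_Dq hτ.ne', inner_smul_left, inner_smul_right,
    real_inner_self_eq_norm_sq, RCLike.conj_to_real, ← Finset.mul_sum] at hparts
  have hrest : -(τ * ∑ n ∈ Finset.Icc (s + 2) M, ⟪g (n - 1), Dq τ (Dq τ g) n⟫_ℝ) ≤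
      seqNorm0 τ s M g * seqNorm0 τ (s + 2) M (Dq τ (Dq τ g)) := by
    calc -(τ * ∑ n ∈ Finset.Icc (s + 2) M, ⟪g (n - 1), Dq τ (Dq τ g) n⟫_ℝ)
        ≤ τ * ∑ n ∈ Finset.Icc (s + 2) M, ‖g (n - 1)‖ * ‖Dq τ (Dq τ g) n‖ := by
          rw [← mul_neg, ← Finset.sum_neg_distrib]
          gcongr with n
          exact (neg_le_abs _).trans (abs_real_inner_le_norm _ _)
      _ ≤ seqNorm0 τ (s + 2) M (fun n => g (n - 1)) * seqNorm0 τ (s + 2) M (Dq τ (Dq τ g)) :=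
          mul_sum_norm_mul_norm_le_seqNorm0_mul hτ.le _ _ _ _
      _ ≤ seqNorm0 τ s M g * seqNorm0 τ (s + 2) M (Dq τ (Dq τ g)) := by
          gcongr
          · exact seqNorm0_nonneg _ _ _
          · exact (seqNorm0_anti hτ.le (Nat.le_succ _) le_rfl _).trans
              (seqNorm0_comp_pred_le hτ.le s M g)
  rw [seqNorm0_sq hτ.le, hparts]
  linarith [real_inner_le_norm (g M) (Dq τ g M),
    (neg_le_abs _).trans (abs_real_inner_le_norm (g s) (Dq τ g (s + 1)))]

lemma seqNorm0_Dq_le_or_sq_le {κ : ℝ} (hκ : 6 ≤ κ) (hτ : 0 < τ) (g : ℕ → X) {s M : ℕ}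
    (hsM : s + 1 ≤ M) :
    seqNorm0 τ (s + 1) M (Dq τ g) * (((M:ℝ) - s) * τ) ≤ κ ^ 2 * seqNorm0 τ s M g ∨
      seqNorm0 τ (s + 1) M (Dq τ g) ^ 2 ≤
        κ ^ 2 * (seqNorm0 τ s M g * seqNorm0 τ (s + 2) M (Dq τ (Dq τ g))) := by
  set u := seqNorm0 τ (s + 1) M (Dq τ g)
  set a₀ := seqNorm0 τ s M g
  set a₂ := seqNorm0 τ (s + 2) M (Dq τ (Dq τ g))
  set T := ((M:ℝ) - s) * τ
  have hT : 0 < T := mul_pos (by rw [sub_pos]; exact_mod_cast hsM) hτ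
  have hg : ∀ n ∈ Finset.Icc s M, ‖g n‖ ^ 2 ≤ a₀ ^ 2 / T + 2 * a₀ * u := by
    intro n hn
    refine (sq_norm_le_seqNorm0 hτ g hn).trans (add_le_add_left ?_ _)
    exact div_le_div_of_nonneg_left (sq_nonneg _) hT (by nlinarith)
  have hDg : ∀ n ∈ Finset.Icc (s + 1) M, ‖Dq τ g n‖ ^ 2 ≤ u ^ 2 / T + 2 * u * a₂ := by
    intro n hn
    have h := sq_norm_le_seqNorm0 hτ (Dq τ g) hn
    rwa [show ((M:ℝ) + 1 - (s + 1 : ℕ)) * τ = T by push_cast; ring] at h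
  have hprod : ∀ n ∈ Finset.Icc s M, ∀ k ∈ Finset.Icc (s + 1) M, (‖g n‖ * ‖Dq τ g k‖) ^ 2 ≤
      (a₀ ^ 2 / T + 2 * a₀ * u) * (u ^ 2 / T + 2 * u * a₂) := by
    intro n hn k hk
    rw [mul_pow]
    exact mul_le_mul (hg n hn) (hDg k hk) (sq_nonneg _) ((sq_nonneg _).trans (hg n hn))
  refine le_or_sq_le_of_sq_le_add hκ hT (seqNorm0_nonneg _ _ _) (seqNorm0_nonneg _ _ _)
    (seqNorm0_nonneg _ _ _) (hprod M (by simp; omega) M (by simp; omega))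
    (hprod s (by simp; omega) (s + 1) (by simp; omega)) ?_
  linarith [seqNorm0_Dq_sq_le hτ g hsM]

end InnerProductSpace

section Normm

variable {X : Type*} [NormedAddCommGroup X] [NormedSpace ℝ X] {τ T : ℝ} {M : ℕ}

lemma Tk_of_ne_zero {j : ℕ} (hj : j ≠ 0) : Tk τ T M j = ((M:ℝ) + 1 - j) * τ :=
  if_neg hj

lemma normm_nonneg (k m : ℕ) (f : ℕ → X) : 0 ≤ normm τ T M k m f :=
  Real.sqrt_nonneg _

lemma normm_term_nonneg (f : ℕ → X) (j e : ℕ) :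
    0 ≤ seqNorm0 τ j M ((Dq τ)^[j] f) ^ 2 / Tk τ T M j ^ (2 * e) :=
  div_nonneg (sq_nonneg _) (by rw [pow_mul]; positivity)

lemma seqNorm0_le_normm {k : ℕ} (m : ℕ) (f : ℕ → X) (hTk : 0 < Tk τ T M k) :
    seqNorm0 τ k M ((Dq τ)^[k] f) ≤ Tk τ T M k ^ m * normm τ T M k m f := by
  have hk := Finset.single_le_sum (fun j _ => normm_term_nonneg (τ := τ) (T := T) (M := M) f j
    (m + k - j)) (Finset.left_mem_Icc.2 (Nat.le_add_right k m))
  rw [Nat.add_sub_cancel, div_le_iff₀ (pow_pos hTk _)] at hk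
  refine le_of_pow_le_pow_left₀ two_ne_zero
    (mul_nonneg (pow_nonneg hTk.le m) (normm_nonneg _ _ f)) ?_
  rw [mul_pow, normm, Real.sq_sqrt (Finset.sum_nonneg fun j _ => normm_term_nonneg f j _),
    ← pow_mul, mul_comm, mul_comm m]
  exact hk

lemma normm_succ_le (k m : ℕ) (f : ℕ → X) :
    normm τ T M (k + 1) m f ≤ normm τ T M k (m + 1) f := by
  refine Real.sqrt_le_sqrt ?_
  rw [show m + (k + 1) = m + 1 + k by ring, show k + 1 + m = k + (m + 1) by ring]
  exact Finset.sum_le_sum_of_subset_of_nonneg (Finset.Icc_subset_Icc (Nat.le_succ k) le_rfl)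
    fun j _ _ => normm_term_nonneg f j _

end Normm

lemma pow_add_two_le_of_le_or_sq_le {κ T u a₀ a₂ B : ℝ} (k : ℕ) (hκ : 1 ≤ κ) (hT : 0 < T)
    (hu : 0 ≤ u) (ha₀ : 0 ≤ a₀) (hdich : u * T ≤ κ ^ 2 * a₀ ∨ u ^ 2 ≤ κ ^ 2 * (a₀ * a₂))
    (ha₂ : a₂ ^ (k + 1) ≤ κ ^ ((k + 1) * k) * u ^ k * B) (huB : u ≤ T ^ (k + 1) * B) :
    u ^ (k + 2) ≤ κ ^ ((k + 2) * (k + 1)) * a₀ ^ (k + 1) * B := by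
  have hB : 0 ≤ B := nonneg_of_mul_nonneg_right (hu.trans huB) (pow_pos hT _)
  rcases hdich with h | h
  · have hsmall : u ^ (k + 2) * T ^ (k + 1) ≤ κ ^ (2 * (k + 1)) * a₀ ^ (k + 1) * B * T ^ (k + 1) :=
      calc u ^ (k + 2) * T ^ (k + 1) = (u * T) ^ (k + 1) * u := by ring
        _ ≤ (κ ^ 2 * a₀) ^ (k + 1) * (T ^ (k + 1) * B) :=
            mul_le_mul (pow_le_pow_left₀ (by positivity) h _) huB hu (by positivity)
        _ = κ ^ (2 * (k + 1)) * a₀ ^ (k + 1) * B * T ^ (k + 1) := by ring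
    refine (le_of_mul_le_mul_right hsmall (pow_pos hT _)).trans ?_
    have hexp : 2 * (k + 1) ≤ (k + 2) * (k + 1) := Nat.mul_le_mul_right _ (by omega)
    gcongr
  · rcases hu.eq_or_lt with rfl | hu₀
    · rw [zero_pow (by omega)]; positivity
    refine le_of_mul_le_mul_right ?_ (pow_pos hu₀ k)
    calc u ^ (k + 2) * u ^ k = (u ^ 2) ^ (k + 1) := by ring
      _ ≤ (κ ^ 2 * (a₀ * a₂)) ^ (k + 1) := pow_le_pow_left₀ (sq_nonneg u) h _
      _ = κ ^ (2 * (k + 1)) * a₀ ^ (k + 1) * a₂ ^ (k + 1) := by ring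
      _ ≤ κ ^ (2 * (k + 1)) * a₀ ^ (k + 1) * (κ ^ ((k + 1) * k) * u ^ k * B) := by gcongr
      _ = κ ^ ((k + 2) * (k + 1)) * a₀ ^ (k + 1) * B * u ^ k := by ring

section Chain

variable {X : Type*} [NormedAddCommGroup X] [InnerProductSpace ℝ X] {τ : ℝ} {M : ℕ}

lemma seqNorm0_iterate_pow_le {κ : ℝ} (hκ : 6 ≤ κ) (hτ : 0 < τ) (T : ℝ) (f : ℕ → X)
    (k : ℕ) {r : ℕ} (hr : r + k + 1 ≤ M) :
    seqNorm0 τ (r + 1) M ((Dq τ)^[r + 1] f) ^ (k + 1) ≤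
      κ ^ ((k + 1) * k) * seqNorm0 τ r M ((Dq τ)^[r] f) ^ k * normm τ T M (r + 1) k f := by
  have hTk : ∀ r, r + 1 ≤ M → 0 < Tk τ T M (r + 1) := fun r hr => by
    rw [Tk_of_ne_zero r.succ_ne_zero]
    have : (r:ℝ) + 1 ≤ M := by exact_mod_cast hr
    exact mul_pos (by push_cast; linarith) hτ
  induction k generalizing r with
  | zero =>
    simpa using seqNorm0_le_normm 0 f (hTk r (by omega))
  | succ k ih =>
    set g := (Dq τ)^[r] f
    have hg₁ : (Dq τ)^[r + 1] f = Dq τ g := Function.iterate_succ_apply' _ _ _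
    have hg₂ : (Dq τ)^[r + 2] f = Dq τ (Dq τ g) := by
      rw [Function.iterate_succ_apply', hg₁]
    have hT : Tk τ T M (r + 1) = ((M:ℝ) - r) * τ := by
      rw [Tk_of_ne_zero r.succ_ne_zero]; push_cast; ring
    have hdich := seqNorm0_Dq_le_or_sq_le hκ hτ g (show r + 1 ≤ M by omega)
    have ha₂ := (ih (r := r + 1) (by omega)).trans
      (mul_le_mul_of_nonneg_left (normm_succ_le (r + 1) k f)
        (mul_nonneg (by positivity) (pow_nonneg (seqNorm0_nonneg _ _ _) _)))
    have huB := seqNorm0_le_normm (k + 1) f (hTk r (by omega))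
    rw [hg₂, hg₁] at ha₂
    rw [hg₁, hT] at huB
    rw [hg₁]
    exact pow_add_two_le_of_le_or_sq_le k (by linarith) (hT ▸ hTk r (by omega))
      (seqNorm0_nonneg _ _ _) (seqNorm0_nonneg _ _ _) hdich ha₂ huB

end Chain

lemma le_mul_rpow_of_sq_le_of_pow_le {P C c A a B : ℝ} {m : ℕ} (hm : 1 ≤ m) (hC : 0 ≤ C)
    (hc : 0 ≤ c) (hA : 0 ≤ A) (hB : 0 ≤ B) (h₁ : P ^ 2 ≤ C ^ 2 * (A * a))
    (h₂ : a ^ m ≤ c ^ m * A ^ (m - 1) * B) :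
    P ≤ C * c ^ ((1:ℝ) / 2) * A ^ (1 - 1 / (2 * (m:ℝ))) * B ^ (1 / (2 * (m:ℝ))) := by
  have hm₀ : (m:ℝ) ≠ 0 := Nat.cast_ne_zero.2 (by omega)
  refine le_of_pow_le_pow_left₀ (n := 2 * m) (by omega) (by positivity) ?_
  calc P ^ (2 * m) = (P ^ 2) ^ m := pow_mul _ _ _
    _ ≤ (C ^ 2 * (A * a)) ^ m := pow_le_pow_left₀ (sq_nonneg _) h₁ m
    _ = C ^ (2 * m) * A ^ m * a ^ m := by ring
    _ ≤ C ^ (2 * m) * A ^ m * (c ^ m * A ^ (m - 1) * B) := by gcongr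
    _ = (C * c ^ ((1:ℝ) / 2) * A ^ (1 - 1 / (2 * (m:ℝ))) * B ^ (1 / (2 * (m:ℝ)))) ^ (2 * m) := by
        rw [mul_pow, mul_pow, mul_pow, ← Real.rpow_mul_natCast hc, ← Real.rpow_mul_natCast hA,
          ← Real.rpow_mul_natCast hB,
          show (1:ℝ) / 2 * ((2 * m : ℕ) : ℝ) = (m : ℕ) by push_cast; ring,
          show (1 - 1 / (2 * (m:ℝ))) * ((2 * m : ℕ) : ℝ) = ((m + (m - 1) : ℕ) : ℝ) by
            push_cast [Nat.cast_sub hm]; field_simp; ring,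
          show 1 / (2 * (m:ℝ)) * ((2 * m : ℕ) : ℝ) = 1 by push_cast; field_simp,
          Real.rpow_natCast, Real.rpow_natCast, Real.rpow_one, pow_add]
        ring

theorem general_agmon_max_general
    {X : Type*} [NormedAddCommGroup X] [InnerProductSpace ℝ X]
    (T : ℝ) (hT : 0 < T) (M : ℕ) (τ : ℝ) (hτ : τ = T / M)
    (f : ℕ → X) (hmean : ∑ n ∈ Finset.range (M + 1), f n = 0)
    (m : ℕ) (hm : 1 ≤ m) (hmM : m ≤ M - 1)
    (n : ℕ) (hn : n ≤ M) :
    ‖f n‖ ≤ cA * (cConst m) ^ ((1:ℝ)/2) *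
      (seqNorm0 τ 0 M f) ^ (1 - 1/(2*(m:ℝ))) *
        (normm τ T M 1 (m-1) f) ^ (1/(2*(m:ℝ))) := by
  have hτ₀ : 0 < τ := hτ ▸ div_pos hT (Nat.cast_pos.2 (by omega))
  have hκ : 6 ≤ cB1 / Real.sqrt 2 := six_le_cB1_div_sqrt_two
  have hκc : (cB1 / Real.sqrt 2) ^ (m - 1) ≤ cConst m := pow_le_cConst (by linarith) le_rfl hm
  have hchain := seqNorm0_iterate_pow_le (M := M) hκ hτ₀ T f (m - 1) (r := 0) (by omega)
  rw [Nat.sub_add_cancel hm, mul_comm m, pow_mul] at hchain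
  simp only [zero_add, Function.iterate_one, Function.iterate_zero, id] at hchain
  have hagmon := sq_norm_le_cA_sq_mul_of_sum_eq_zero hτ₀ f hmean hn
  refine le_mul_rpow_of_sq_le_of_pow_le hm (Real.sqrt_nonneg _) (hκc.trans' (by positivity))
    (seqNorm0_nonneg _ _ _) (normm_nonneg _ _ _) hagmon (hchain.trans ?_)
  gcongr
  · exact normm_nonneg _ _ _
  · exact pow_nonneg (seqNorm0_nonneg _ _ _) _

/-- Lemma 4.8: discrete Agmon-type maximum bound for zero-mean sequences:
`‖f_n‖ ≤ c_A c_m^{1/2} ‖f‖₀^{1−1/(2m)} ‖D¹f‖_{m−1}^{1/(2m)}` for `1 ≤ m ≤ M−1`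
(with `c_1 = 1`, which is the value of `cConst 1`). -/
theorem general_agmon_max
    {X : Type*} [NormedAddCommGroup X] [InnerProductSpace ℝ X] [CompleteSpace X]
    (T : ℝ) (hT : 0 < T) (M : ℕ) (hM : 0 < M) (τ : ℝ) (hτ : τ = T / M)
    (f : ℕ → X) (hmean : ∑ n ∈ Finset.range (M + 1), f n = 0)
    (m : ℕ) (hm : 1 ≤ m) (hmM : m ≤ M - 1)
    (n : ℕ) (hn : n ≤ M) :
    ‖f n‖ ≤ cA * (cConst m) ^ ((1:ℝ)/2) *
      (seqNorm0 τ 0 M f) ^ (1 - 1/(2*(m:ℝ))) *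
        (normm τ T M 1 (m-1) f) ^ (1/(2*(m:ℝ))) :=
  general_agmon_max_general T hT M τ hτ f hmean m hm hmM n hn
end

section
/- Let f : ℝ → X be T-periodic and m times continuously differentiable, where m is an integer with 1 ≤ m ≤ M−1. Let f_n = f(t_n) for n ∈ ℤ (an M-periodic sequence). Then: (i) ‖D^1 f‖_0 ≤ 2^{(m−1)/m} · m^{1/m} · ‖f‖_0^{(m−1)/m} · (∫_0^T ‖∂_t^m f(t)‖² dt)^{1/(2m)}; and (ii) for every 1 ≤ n ≤ M, ‖f_n‖ ≤ 2^{(m−1)/(2m)} · m^{1/(2m)} · c_A · ‖f‖_0^{1−1/(2m)} · (∫_0^T ‖∂_t^m f(t)‖² dt)^{1/(4m)} + ‖f‖_0/√T, where c_A = √(2 + √2/2). If moreover f_1 + ⋯ + f_M = 0, the term ‖f‖_0/√T in (ii) can be omitted. -/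
/-- backward difference quotient of a bi-infinite sequence. -/
noncomputable def DqZ {X : Type*} [NormedAddCommGroup X] [NormedSpace ℝ X] (τ : ℝ) (f : ℤ → X) : ℤ → X :=
  fun n => τ⁻¹ • (f n - f (n - 1))

/-- discrete `L²` norm `(τ Σ_{n=1}^{M} ‖f n‖²)^{1/2}` over one period. -/
noncomputable def seqNorm0Z {X : Type*} [NormedAddCommGroup X]
    (τ : ℝ) (M : ℕ) (f : ℤ → X) : ℝ :=
  Real.sqrt (τ * ∑ n ∈ Finset.Icc (1:ℤ) (M:ℤ), ‖f n‖^2)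

/-!
The difference quotients of the samples are the samples of the continuous difference quotients
`DqR`, and `DqR τ g t` is the mean of `g'` over `[t - τ, t]`. By Cauchy–Schwarz and the periodicity
of `g'`, both `∫₀ᵀ ‖DqR τ g‖²` and the Riemann sum `τ Σₙ ‖DqR τ g (nτ)‖²` are at most `∫₀ᵀ ‖g'‖²`,
whence `‖D^m s‖₀² ≤ ∫₀ᵀ ‖∂ₜ^m f‖²`. Summation by parts gives
`‖D^{k+1} s‖₀² ≤ ‖D^k s‖₀ ‖D^{k+2} s‖₀`, so `k ↦ ‖D^k s‖₀` is log-convex and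
`‖D s‖₀^m ≤ ‖s‖₀^{m-1} ‖D^m s‖₀`: this is (i) with constant `1` (the constants of the statement
are `≥ 1`). For (ii), over one period `‖s_n‖²` exceeds its mean `‖s‖₀² / T` by at most half its
total variation, which is at most `2 ‖s‖₀ ‖D s‖₀`. For data of mean zero, the discrete Poincaré
inequality `‖s‖₀ ≤ T ‖D s‖₀` absorbs the mean into that term.
-/

open Finset Function MeasureTheory

namespace Int

variable {β : Type*}

lemma card_Icc_one (M : ℕ) : #(Icc (1 : ℤ) M) = M := by
  rw [card_Icc, add_sub_cancel_right, toNat_natCast]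

lemma sum_Icc_one_eq_sum_range [AddCommMonoid β] (u : ℤ → β) (M : ℕ) :
    ∑ n ∈ Icc (1 : ℤ) M, u n = ∑ k ∈ Finset.range M, u (k + 1) := by
  rw [Icc_eq_finset_map, sum_map]
  simp [add_comm]

lemma sum_Ioc_sub_sub_one [AddCommGroup β] (f : ℤ → β) {a b : ℤ} (h : a ≤ b) :
    ∑ n ∈ Ioc a b, (f n - f (n - 1)) = f b - f a := by
  rw [Ioc_eq_finset_map, sum_map]
  convert sum_range_sub (fun k : ℕ => f (a + k)) (b - a).toNat using 2 with k
  · simp only [Embedding.trans_apply, Nat.castEmbedding_apply, addLeftEmbedding_apply]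
    push_cast
    ring_nf
  · rw [toNat_of_nonneg (by omega), add_sub_cancel]
  · simp

end Int

namespace Function.Periodic

variable {β : Type*} [AddCommMonoid β] {u : ℤ → β} {M : ℕ}

lemma sum_Icc_one_comp_add_one (hu : Periodic u M) :
    ∑ n ∈ Icc (1 : ℤ) M, u (n + 1) = ∑ n ∈ Icc (1 : ℤ) M, u n := by
  rw [Int.sum_Icc_one_eq_sum_range, Int.sum_Icc_one_eq_sum_range]
  rcases M with _ | M
  · simp
  · rw [sum_range_succ, sum_range_succ']
    push_cast
    rw [show (M : ℤ) + 1 + 1 = 1 + ((M + 1 : ℕ) : ℤ) by push_cast; ring, hu]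

lemma sum_Icc_one_comp_add (hu : Periodic u M) (c : ℤ) :
    ∑ n ∈ Icc (1 : ℤ) M, u (n + c) = ∑ n ∈ Icc (1 : ℤ) M, u n := by
  induction c using Int.induction_on with
  | zero => simp
  | succ c ih =>
    rw [← ih, ← (hu.add_const c).sum_Icc_one_comp_add_one]
    exact sum_congr rfl fun n _ => by ring_nf
  | pred c ih =>
    rw [← ih, ← (hu.add_const (-c - 1)).sum_Icc_one_comp_add_one]
    exact sum_congr rfl fun n _ => by ring_nf

end Function.Periodic

lemma Function.Periodic.two_mul_abs_sub_le_sum_abs_sub {a : ℤ → ℝ} {M : ℕ} (ha : Periodic a M)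
    {k n : ℤ} (hk : k ∈ Icc (1 : ℤ) M) (hn : n ∈ Icc (1 : ℤ) M) :
    2 * |a n - a k| ≤ ∑ j ∈ Icc (1 : ℤ) M, |a j - a (j - 1)| := by
  wlog hkn : k ≤ n generalizing k n
  · rw [abs_sub_comm]
    exact this hn hk (le_of_not_ge hkn)
  have hsub : Ioc k n ⊆ Icc 1 (M : ℤ) := fun j hj => by
    simp only [mem_Ioc, mem_Icc] at hj hk hn ⊢
    omega
  have hpath : ∑ j ∈ Ioc k n, (a j - a (j - 1)) = a n - a k := Int.sum_Ioc_sub_sub_one a hkn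
  have hloop : ∑ j ∈ Icc 1 (M : ℤ), (a j - a (j - 1)) = 0 := by
    rw [show Icc 1 (M : ℤ) = Ioc 0 (M : ℤ) by simpa using Icc_add_one_left_eq_Ioc (0 : ℤ) M,
      Int.sum_Ioc_sub_sub_one a (by positivity), ← zero_add (M : ℤ), ha, sub_self]
  have hrest : ∑ j ∈ Icc 1 (M : ℤ) \ Ioc k n, (a j - a (j - 1)) = -(a n - a k) := by
    rw [← hpath, eq_neg_iff_add_eq_zero, sum_sdiff hsub, hloop]
  calc 2 * |a n - a k|
      = |∑ j ∈ Icc 1 (M : ℤ) \ Ioc k n, (a j - a (j - 1))|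
        + |∑ j ∈ Ioc k n, (a j - a (j - 1))| := by rw [hrest, hpath, abs_neg]; ring
    _ ≤ ∑ j ∈ Icc 1 (M : ℤ) \ Ioc k n, |a j - a (j - 1)| + ∑ j ∈ Ioc k n, |a j - a (j - 1)| :=
        add_le_add (abs_sum_le_sum_abs _ _) (abs_sum_le_sum_abs _ _)
    _ = ∑ j ∈ Icc (1 : ℤ) M, |a j - a (j - 1)| := sum_sdiff hsub

lemma norm_sub_le_sum_norm_sub_sub_one {E : Type*} [SeminormedAddCommGroup E] (s : ℤ → E) {M : ℕ}
    {k n : ℤ} (hk : k ∈ Icc (1 : ℤ) M) (hn : n ∈ Icc (1 : ℤ) M) :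
    ‖s n - s k‖ ≤ ∑ j ∈ Icc (1 : ℤ) M, ‖s j - s (j - 1)‖ := by
  wlog hkn : k ≤ n generalizing k n
  · rw [norm_sub_rev]
    exact this hn hk (le_of_not_ge hkn)
  rw [← Int.sum_Ioc_sub_sub_one s hkn]
  refine (norm_sum_le _ _).trans (sum_le_sum_of_subset_of_nonneg (fun j hj => ?_)
    fun _ _ _ => norm_nonneg _)
  simp only [mem_Ioc, mem_Icc] at hj hk hn ⊢
  omega

lemma natCast_pos_of_mem_Icc_one {M : ℕ} {n : ℤ} (hn : n ∈ Icc (1 : ℤ) M) : (0 : ℝ) < M := by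
  simp only [mem_Icc] at hn
  exact_mod_cast (show (0 : ℤ) < M by omega)

lemma abs_sq_norm_sub_sq_norm_le {E : Type*} [SeminormedAddCommGroup E] (x y : E) :
    |‖x‖ ^ 2 - ‖y‖ ^ 2| ≤ ‖x - y‖ * (‖x‖ + ‖y‖) := by
  rw [sq_sub_sq, abs_mul, abs_of_nonneg (by positivity : 0 ≤ ‖x‖ + ‖y‖), mul_comm]
  exact mul_le_mul_of_nonneg_right (abs_norm_sub_norm_le x y) (by positivity)

lemma one_le_two_rpow_mul_rpow {m a b : ℝ} (hm : 1 ≤ m) (ha : 0 ≤ a) (hb : 0 ≤ b) :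
    1 ≤ (2 : ℝ) ^ a * m ^ b :=
  one_le_mul_of_one_le_of_one_le (Real.one_le_rpow one_le_two ha) (Real.one_le_rpow hm hb)

lemma sqrt_two_le_cA : √2 ≤ cA := Real.sqrt_le_sqrt (le_add_of_nonneg_right (by positivity))

lemma one_le_cA : 1 ≤ cA := (Real.one_le_sqrt.mpr one_le_two).trans sqrt_two_le_cA

lemma sqrt_add_le_sqrt_add_sqrt {x y : ℝ} (hx : 0 ≤ x) (hy : 0 ≤ y) : √(x + y) ≤ √x + √y :=
  Real.sqrt_le_iff.mpr ⟨by positivity, by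
    nlinarith [Real.sq_sqrt hx, Real.sq_sqrt hy, Real.sqrt_nonneg x, Real.sqrt_nonneg y]⟩

lemma le_rpow_mul_rpow_of_pow_le {x y z : ℝ} (hx : 0 ≤ x) (hy : 0 ≤ y) (hz : 0 ≤ z) {m : ℕ}
    (hm : 1 ≤ m) (h : x ^ m ≤ y ^ (m - 1) * z) :
    x ≤ y ^ (((m : ℝ) - 1) / m) * z ^ (1 / (m : ℝ)) := by
  have hm0 : (0 : ℝ) < m := by exact_mod_cast hm
  calc x = (x ^ m) ^ (1 / (m : ℝ)) := by
        rw [one_div, Real.pow_rpow_inv_natCast hx (by omega)]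
    _ ≤ (y ^ (m - 1) * z) ^ (1 / (m : ℝ)) := Real.rpow_le_rpow (by positivity) h (by positivity)
    _ = y ^ (((m : ℝ) - 1) / m) * z ^ (1 / (m : ℝ)) := by
        rw [Real.mul_rpow (by positivity) hz, ← Real.rpow_natCast, ← Real.rpow_mul hy,
          Nat.cast_sub hm, Nat.cast_one, mul_one_div]

lemma sqrt_mul_le_rpow_mul_rpow {x y z : ℝ} (hx : 0 ≤ x) (hz : 0 ≤ z) {m : ℝ} (hm : 1 ≤ m)
    (h : y ≤ x ^ ((m - 1) / m) * z ^ (1 / (2 * m))) :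
    √(x * y) ≤ x ^ (1 - 1 / (2 * m)) * z ^ (1 / (4 * m)) := by
  have hm' : 0 ≤ (m - 1) / m := div_nonneg (by linarith) (by linarith)
  calc √(x * y) ≤ √(x * (x ^ ((m - 1) / m) * z ^ (1 / (2 * m)))) :=
        Real.sqrt_le_sqrt (mul_le_mul_of_nonneg_left h hx)
    _ = (x ^ (1 + (m - 1) / m)) ^ (1 / 2 : ℝ) * (z ^ (1 / (2 * m))) ^ (1 / 2 : ℝ) := by
        rw [Real.rpow_add' hx (by linarith), Real.rpow_one, ← mul_assoc, Real.sqrt_eq_rpow,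
          Real.mul_rpow (by positivity) (by positivity)]
    _ = x ^ (1 - 1 / (2 * m)) * z ^ (1 / (4 * m)) := by
        rw [← Real.rpow_mul hx, ← Real.rpow_mul hz]
        have : m ≠ 0 := by positivity
        congr 2 <;> field_simp <;> ring

section LogConvex

variable {b : ℕ → ℝ}

lemma seq_one_mul_le_of_sq_le_mul (hb : ∀ k, 0 ≤ b k) (h : ∀ k, b (k + 1) ^ 2 ≤ b k * b (k + 2))
    (k : ℕ) : b 1 * b (k + 1) ≤ b 0 * b (k + 2) := by
  induction k with
  | zero => simpa [sq] using h 0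
  | succ k ih =>
    rcases (hb (k + 2)).eq_or_lt with h0 | hpos
    · rw [← h0, mul_zero]
      exact mul_nonneg (hb 0) (hb (k + 3))
    · refine le_of_mul_le_mul_right ?_ hpos
      calc b 1 * b (k + 2) * b (k + 2) = b 1 * b (k + 2) ^ 2 := by ring
        _ ≤ b 1 * (b (k + 1) * b (k + 3)) := mul_le_mul_of_nonneg_left (h (k + 1)) (hb 1)
        _ = b 1 * b (k + 1) * b (k + 3) := by ring
        _ ≤ b 0 * b (k + 2) * b (k + 3) := mul_le_mul_of_nonneg_right ih (hb (k + 3))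
        _ = b 0 * b (k + 3) * b (k + 2) := by ring

lemma seq_one_pow_le_of_sq_le_mul (hb : ∀ k, 0 ≤ b k) (h : ∀ k, b (k + 1) ^ 2 ≤ b k * b (k + 2))
    (k : ℕ) : b 1 ^ (k + 1) ≤ b 0 ^ k * b (k + 1) := by
  induction k with
  | zero => simp
  | succ k ih =>
    calc b 1 ^ (k + 2) = b 1 ^ (k + 1) * b 1 := pow_succ _ _
      _ ≤ b 0 ^ k * b (k + 1) * b 1 := mul_le_mul_of_nonneg_right ih (hb 1)
      _ = b 0 ^ k * (b 1 * b (k + 1)) := by ring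
      _ ≤ b 0 ^ k * (b 0 * b (k + 2)) :=
          mul_le_mul_of_nonneg_left (seq_one_mul_le_of_sq_le_mul hb h k) (pow_nonneg (hb 0) k)
      _ = b 0 ^ (k + 1) * b (k + 2) := by ring

end LogConvex

section SeqNorm

variable {X Y : Type*} [NormedAddCommGroup X] [NormedAddCommGroup Y] {τ : ℝ} {M : ℕ}

lemma seqNorm0Z_nonneg (s : ℤ → X) : 0 ≤ seqNorm0Z τ M s := Real.sqrt_nonneg _

lemma sq_seqNorm0Z (hτ : 0 ≤ τ) (s : ℤ → X) :
    seqNorm0Z τ M s ^ 2 = τ * ∑ n ∈ Icc (1 : ℤ) M, ‖s n‖ ^ 2 :=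
  Real.sq_sqrt (mul_nonneg hτ (sum_nonneg fun _ _ => sq_nonneg _))

lemma Function.Periodic.seqNorm0Z_comp_add {s : ℤ → X} (hs : Periodic s M) (c : ℤ) :
    seqNorm0Z τ M (fun n => s (n + c)) = seqNorm0Z τ M s :=
  congrArg (fun x => √(τ * x)) ((hs.comp fun x => ‖x‖ ^ 2).sum_Icc_one_comp_add c)

lemma mul_sum_norm_mul_norm_le_seqNorm0Z (hτ : 0 ≤ τ) (u : ℤ → X) (v : ℤ → Y) :
    τ * ∑ n ∈ Icc (1 : ℤ) M, ‖u n‖ * ‖v n‖ ≤ seqNorm0Z τ M u * seqNorm0Z τ M v := by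
  rw [seqNorm0Z, seqNorm0Z, Real.sqrt_mul hτ, Real.sqrt_mul hτ,
    mul_mul_mul_comm, Real.mul_self_sqrt hτ]
  exact mul_le_mul_of_nonneg_left (Real.sum_mul_le_sqrt_mul_sqrt _ _ _) hτ

end SeqNorm

section DifferenceQuotient

variable {X : Type*} [NormedAddCommGroup X] [NormedSpace ℝ X] {τ : ℝ}

lemma periodic_DqZ {s : ℤ → X} {c : ℤ} (hs : Periodic s c) (τ : ℝ) :
    Periodic (DqZ τ s) c := fun n => by
  simp only [DqZ]
  rw [hs, show n + c - 1 = n - 1 + c by ring, hs]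

lemma periodic_iterate_DqZ {s : ℤ → X} {c : ℤ} (hs : Periodic s c) (τ : ℝ) (k : ℕ) :
    Periodic ((DqZ τ)^[k] s) c :=
  Function.Iterate.rec (fun u => Periodic u c) hs (fun _ hu => periodic_DqZ hu τ) k

lemma smul_DqZ (hτ : τ ≠ 0) (s : ℤ → X) (n : ℤ) : τ • DqZ τ s n = s n - s (n - 1) := by
  rw [DqZ, smul_smul, mul_inv_cancel₀ hτ, one_smul]

lemma norm_sub_sub_one_eq_mul_norm_DqZ (hτ : 0 < τ) (s : ℤ → X) (n : ℤ) :
    ‖s n - s (n - 1)‖ = τ * ‖DqZ τ s n‖ := by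
  rw [← smul_DqZ hτ.ne', norm_smul, Real.norm_of_nonneg hτ.le]

end DifferenceQuotient

section LogConvexity

variable {X : Type*} [NormedAddCommGroup X] [InnerProductSpace ℝ X] {τ : ℝ} {M : ℕ}

lemma sq_seqNorm0Z_DqZ_le (hτ : 0 < τ) {g : ℤ → X} (hg : Periodic g M) :
    seqNorm0Z τ M (DqZ τ g) ^ 2 ≤ seqNorm0Z τ M g * seqNorm0Z τ M (DqZ τ (DqZ τ g)) := by
  set h := DqZ τ g
  set w := DqZ τ h
  have hh : Periodic h M := periodic_DqZ hg τ
  have hshift : ∑ n ∈ Icc (1 : ℤ) M, inner ℝ (g (n - 1)) (h n)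
      = ∑ n ∈ Icc (1 : ℤ) M, inner ℝ (g n) (h (n + 1)) := by
    have hu : Periodic (fun n => inner ℝ (g (n - 1)) (h n)) M := fun n => by
      simp only [← sub_add_eq_add_sub, hg _, hh _]
    rw [← hu.sum_Icc_one_comp_add 1]
    simp only [add_sub_cancel_right]
  have hnorm (n : ℤ) : τ * ‖h n‖ ^ 2 = inner ℝ (g n) (h n) - inner ℝ (g (n - 1)) (h n) := by
    rw [← real_inner_self_eq_norm_sq, ← real_inner_smul_left, smul_DqZ hτ.ne', inner_sub_left]
  have hinner (n : ℤ) :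
      τ * inner ℝ (g n) (w (n + 1)) = inner ℝ (g n) (h (n + 1)) - inner ℝ (g n) (h n) := by
    rw [← real_inner_smul_right, smul_DqZ hτ.ne', inner_sub_right, add_sub_cancel_right]
  calc seqNorm0Z τ M h ^ 2 = -(τ * ∑ n ∈ Icc (1 : ℤ) M, inner ℝ (g n) (w (n + 1))) := by
        rw [sq_seqNorm0Z hτ.le, mul_sum, mul_sum]
        simp only [hnorm, hinner, sum_sub_distrib, hshift]
        ring
    _ ≤ τ * ∑ n ∈ Icc (1 : ℤ) M, ‖g n‖ * ‖w (n + 1)‖ := by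
        rw [← mul_neg, ← sum_neg_distrib]
        exact mul_le_mul_of_nonneg_left
          (sum_le_sum fun n _ => (neg_le_abs _).trans (abs_real_inner_le_norm _ _)) hτ.le
    _ ≤ seqNorm0Z τ M g * seqNorm0Z τ M w := by
        rw [← (periodic_DqZ hh τ).seqNorm0Z_comp_add 1]
        exact mul_sum_norm_mul_norm_le_seqNorm0Z hτ.le _ _

lemma seqNorm0Z_DqZ_pow_le (hτ : 0 < τ) {s : ℤ → X} (hs : Periodic s M) (k : ℕ) :
    seqNorm0Z τ M (DqZ τ s) ^ (k + 1) ≤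
      seqNorm0Z τ M s ^ k * seqNorm0Z τ M ((DqZ τ)^[k + 1] s) :=
  seq_one_pow_le_of_sq_le_mul (b := fun k => seqNorm0Z τ M ((DqZ τ)^[k] s))
    (fun _ => seqNorm0Z_nonneg _) (fun k => by
      simpa only [Function.iterate_succ_apply'] using
        sq_seqNorm0Z_DqZ_le hτ (periodic_iterate_DqZ hs τ k)) k

end LogConvexity

section PointwiseBounds

variable {X : Type*} [NormedAddCommGroup X] [NormedSpace ℝ X] {τ : ℝ} {M : ℕ} {s : ℤ → X}

lemma sum_abs_sq_norm_sub_le (hτ : 0 < τ) (hs : Periodic s M) :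
    ∑ j ∈ Icc (1 : ℤ) M, |‖s j‖ ^ 2 - ‖s (j - 1)‖ ^ 2| ≤
      2 * (seqNorm0Z τ M s * seqNorm0Z τ M (DqZ τ s)) := by
  have hshift : seqNorm0Z τ M (fun j => s (j - 1)) = seqNorm0Z τ M s := by
    simpa only [← sub_eq_add_neg] using hs.seqNorm0Z_comp_add (-1)
  calc ∑ j ∈ Icc (1 : ℤ) M, |‖s j‖ ^ 2 - ‖s (j - 1)‖ ^ 2|
      ≤ ∑ j ∈ Icc (1 : ℤ) M, τ * ‖DqZ τ s j‖ * (‖s j‖ + ‖s (j - 1)‖) := sum_le_sum fun j _ => by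
        rw [← norm_sub_sub_one_eq_mul_norm_DqZ hτ]
        exact abs_sq_norm_sub_sq_norm_le _ _
    _ = τ * ∑ j ∈ Icc (1 : ℤ) M, ‖DqZ τ s j‖ * ‖s j‖
        + τ * ∑ j ∈ Icc (1 : ℤ) M, ‖DqZ τ s j‖ * ‖s (j - 1)‖ := by
        rw [mul_sum, mul_sum, ← sum_add_distrib]
        exact sum_congr rfl fun j _ => by ring
    _ ≤ seqNorm0Z τ M (DqZ τ s) * seqNorm0Z τ M s
        + seqNorm0Z τ M (DqZ τ s) * seqNorm0Z τ M (fun j => s (j - 1)) :=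
        add_le_add (mul_sum_norm_mul_norm_le_seqNorm0Z hτ.le _ _)
          (mul_sum_norm_mul_norm_le_seqNorm0Z hτ.le _ _)
    _ = 2 * (seqNorm0Z τ M s * seqNorm0Z τ M (DqZ τ s)) := by rw [hshift]; ring

lemma sq_norm_le_of_periodic (hτ : 0 < τ) (hs : Periodic s M) {n : ℤ} (hn : n ∈ Icc (1 : ℤ) M) :
    ‖s n‖ ^ 2 ≤ seqNorm0Z τ M s * seqNorm0Z τ M (DqZ τ s) + seqNorm0Z τ M s ^ 2 / (τ * M) := by
  have hM : (0 : ℝ) < M := natCast_pos_of_mem_Icc_one hn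
  have hk : ∀ k ∈ Icc (1 : ℤ) M,
      ‖s n‖ ^ 2 ≤ ‖s k‖ ^ 2 + seqNorm0Z τ M s * seqNorm0Z τ M (DqZ τ s) := fun k hk => by
    have hosc := (hs.comp fun x => ‖x‖ ^ 2).two_mul_abs_sub_le_sum_abs_sub hk hn
    simp only [comp_apply] at hosc
    linarith [le_abs_self (‖s n‖ ^ 2 - ‖s k‖ ^ 2), sum_abs_sq_norm_sub_le hτ hs]
  have hsum := sum_le_sum hk
  rw [sum_const, sum_add_distrib, sum_const, Int.card_Icc_one, nsmul_eq_mul, nsmul_eq_mul,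
    ← mul_div_cancel_left₀ (∑ k ∈ Icc (1 : ℤ) M, ‖s k‖ ^ 2) hτ.ne', ← sq_seqNorm0Z hτ.le] at hsum
  calc ‖s n‖ ^ 2 = M * ‖s n‖ ^ 2 / M := by field_simp
    _ ≤ (seqNorm0Z τ M s ^ 2 / τ + M * (seqNorm0Z τ M s * seqNorm0Z τ M (DqZ τ s))) / M :=
        div_le_div_of_nonneg_right hsum hM.le
    _ = _ := by field_simp; ring

lemma norm_le_of_sum_eq_zero (hτ : 0 < τ) (hz : ∑ n ∈ Icc (1 : ℤ) M, s n = 0) {n : ℤ}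
    (hn : n ∈ Icc (1 : ℤ) M) : ‖s n‖ ≤ τ * ∑ j ∈ Icc (1 : ℤ) M, ‖DqZ τ s j‖ := by
  have hM : (0 : ℝ) < M := natCast_pos_of_mem_Icc_one hn
  have hmean : (M : ℝ) • s n = ∑ k ∈ Icc (1 : ℤ) M, (s n - s k) := by
    rw [sum_sub_distrib, hz, sub_zero, sum_const, Int.card_Icc_one, Nat.cast_smul_eq_nsmul]
  refine le_of_mul_le_mul_left ?_ hM
  calc M * ‖s n‖ = ‖∑ k ∈ Icc (1 : ℤ) M, (s n - s k)‖ := by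
        rw [← hmean, norm_smul, Real.norm_of_nonneg hM.le]
    _ ≤ ∑ k ∈ Icc (1 : ℤ) M, ∑ j ∈ Icc (1 : ℤ) M, ‖s j - s (j - 1)‖ :=
        (norm_sum_le _ _).trans (sum_le_sum fun k hk => norm_sub_le_sum_norm_sub_sub_one s hk hn)
    _ = M * (τ * ∑ j ∈ Icc (1 : ℤ) M, ‖DqZ τ s j‖) := by
        simp [norm_sub_sub_one_eq_mul_norm_DqZ hτ, mul_sum]

lemma seqNorm0Z_le_of_sum_eq_zero (hτ : 0 < τ) (hz : ∑ n ∈ Icc (1 : ℤ) M, s n = 0) :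
    seqNorm0Z τ M s ≤ τ * M * seqNorm0Z τ M (DqZ τ s) := by
  have hτM : 0 ≤ τ * M := mul_nonneg hτ.le M.cast_nonneg
  have hpt (n : ℤ) (hn : n ∈ Icc (1 : ℤ) M) : ‖s n‖ ≤ √(τ * M) * seqNorm0Z τ M (DqZ τ s) := by
    refine (norm_le_of_sum_eq_zero hτ hz hn).trans ?_
    simpa [seqNorm0Z, mul_comm] using
      mul_sum_norm_mul_norm_le_seqNorm0Z hτ.le (M := M) (DqZ τ s) (fun _ => (1 : ℝ))
  refine Real.sqrt_le_iff.mpr ⟨mul_nonneg hτM (seqNorm0Z_nonneg _), ?_⟩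
  calc τ * ∑ n ∈ Icc (1 : ℤ) M, ‖s n‖ ^ 2
      ≤ τ * ∑ n ∈ Icc (1 : ℤ) M, (√(τ * M) * seqNorm0Z τ M (DqZ τ s)) ^ 2 :=
        mul_le_mul_of_nonneg_left (sum_le_sum fun n hn =>
          pow_le_pow_left₀ (norm_nonneg _) (hpt n hn) 2) hτ.le
    _ = (τ * M * seqNorm0Z τ M (DqZ τ s)) ^ 2 := by
        rw [sum_const, Int.card_Icc_one, nsmul_eq_mul, mul_pow, Real.sq_sqrt hτM]
        ring

lemma norm_le_of_periodic (hτ : 0 < τ) (hs : Periodic s M) {n : ℤ} (hn : n ∈ Icc (1 : ℤ) M) :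
    ‖s n‖ ≤ √(seqNorm0Z τ M s * seqNorm0Z τ M (DqZ τ s)) + seqNorm0Z τ M s / √(τ * M) := by
  have hT : 0 ≤ τ * M := mul_nonneg hτ.le M.cast_nonneg
  calc ‖s n‖ = √(‖s n‖ ^ 2) := (Real.sqrt_sq (norm_nonneg _)).symm
    _ ≤ √(seqNorm0Z τ M s * seqNorm0Z τ M (DqZ τ s) + seqNorm0Z τ M s ^ 2 / (τ * M)) :=
        Real.sqrt_le_sqrt (sq_norm_le_of_periodic hτ hs hn)
    _ ≤ √(seqNorm0Z τ M s * seqNorm0Z τ M (DqZ τ s)) + √(seqNorm0Z τ M s ^ 2 / (τ * M)) :=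
        sqrt_add_le_sqrt_add_sqrt (mul_nonneg (seqNorm0Z_nonneg _) (seqNorm0Z_nonneg _))
          (div_nonneg (sq_nonneg _) hT)
    _ = _ := by rw [Real.sqrt_div' _ hT, Real.sqrt_sq (seqNorm0Z_nonneg s)]

lemma norm_le_of_periodic_of_sum_eq_zero (hτ : 0 < τ) (hs : Periodic s M)
    (hz : ∑ n ∈ Icc (1 : ℤ) M, s n = 0) {n : ℤ} (hn : n ∈ Icc (1 : ℤ) M) :
    ‖s n‖ ≤ √2 * √(seqNorm0Z τ M s * seqNorm0Z τ M (DqZ τ s)) := by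
  have hmean : seqNorm0Z τ M s ^ 2 / (τ * M) ≤ seqNorm0Z τ M s * seqNorm0Z τ M (DqZ τ s) :=
    div_le_of_le_mul₀ (mul_nonneg hτ.le M.cast_nonneg)
      (mul_nonneg (seqNorm0Z_nonneg _) (seqNorm0Z_nonneg _)) (by
        nlinarith [mul_le_mul_of_nonneg_left (seqNorm0Z_le_of_sum_eq_zero hτ hz)
          (seqNorm0Z_nonneg (τ := τ) (M := M) s)])
  rw [← Real.sqrt_mul zero_le_two, ← Real.sqrt_sq (norm_nonneg _)]
  exact Real.sqrt_le_sqrt ((sq_norm_le_of_periodic hτ hs hn).trans (by linarith))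

end PointwiseBounds

lemma sq_intervalIntegral_le {φ : ℝ → ℝ} (hφ : Continuous φ) {a b : ℝ} (hab : a ≤ b) :
    (∫ u in a..b, φ u) ^ 2 ≤ (b - a) * ∫ u in a..b, φ u ^ 2 := by
  rcases hab.eq_or_lt with rfl | hlt
  · simp
  have hba : 0 < b - a := sub_pos.mpr hlt
  set c := (∫ u in a..b, φ u) / (b - a)
  have hvar : 0 ≤ ∫ u in a..b, (φ u - c) ^ 2 :=
    intervalIntegral.integral_nonneg hab fun u _ => sq_nonneg _
  have hexpand : ∫ u in a..b, (φ u - c) ^ 2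
      = (∫ u in a..b, φ u ^ 2) - 2 * c * (∫ u in a..b, φ u) + (b - a) * c ^ 2 := by
    simp_rw [sub_sq]
    rw [intervalIntegral.integral_add, intervalIntegral.integral_sub,
      intervalIntegral.integral_const, smul_eq_mul, intervalIntegral.integral_mul_const,
      intervalIntegral.integral_const_mul]
    · ring
    all_goals exact (by fun_prop : Continuous _).intervalIntegrable _ _
  have hmean : (∫ u in a..b, φ u) = c * (b - a) := (div_mul_cancel₀ _ hba.ne').symm
  rw [hexpand, hmean] at hvar
  rw [hmean]
  nlinarith

lemma Function.Periodic.intervalIntegral_intervalIntegral_sub {p : ℝ → ℝ} {T : ℝ}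
    (hp : Continuous p) (hper : Periodic p T) (τ : ℝ) :
    ∫ t in (0 : ℝ)..T, (∫ u in (t - τ)..t, p u) = τ * ∫ t in (0 : ℝ)..T, p t := by
  rcases eq_or_ne T 0 with rfl | hT
  · simp
  have hint : ∀ a b, IntervalIntegrable p volume a b := fun a b => hp.intervalIntegrable a b
  set c := ∫ t in (0 : ℝ)..T, p t
  set F := fun x => ∫ u in (0 : ℝ)..x, p u
  have hwindow (a b : ℝ) : ∫ u in a..b, p u = F b - F a :=
    (intervalIntegral.integral_interval_sub_left (hint 0 b) (hint 0 a)).symm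
  -- `F` grows by `c` over each period, so removing its linear drift leaves a periodic function.
  set G := fun x => F x - c / T * x
  have hG : Periodic G T := fun x => by
    have hc : F (x + T) - F x = c := by
      rw [← hwindow, hper.intervalIntegral_add_eq x 0, zero_add]
    simp only [G]
    rw [mul_add, div_mul_cancel₀ c hT]
    linarith
  have hGc : Continuous G :=
    (intervalIntegral.continuous_primitive hint 0).sub (continuous_const.mul continuous_id)
  have hshift : ∫ t in (0 : ℝ)..T, G (t - τ) = ∫ t in (0 : ℝ)..T, G t := by
    rw [intervalIntegral.integral_comp_sub_right, show (0 : ℝ) - τ = -τ by ring,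
      show T - τ = -τ + T by ring, hG.intervalIntegral_add_eq (-τ) 0, zero_add]
  calc ∫ t in (0 : ℝ)..T, (∫ u in (t - τ)..t, p u)
      = ∫ t in (0 : ℝ)..T, ((G t - G (t - τ)) + c / T * τ) := by
        congr 1; ext t; rw [hwindow]; simp only [G]; ring
    _ = τ * c := by
        rw [intervalIntegral.integral_add, intervalIntegral.integral_sub, hshift,
          intervalIntegral.integral_const, smul_eq_mul]
        · field_simp; ring
        all_goals exact (by fun_prop : Continuous _).intervalIntegrable _ _

lemma Function.Periodic.deriv {X : Type*} [NormedAddCommGroup X] [NormedSpace ℝ X]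
    {g : ℝ → X} {T : ℝ} (hg : Periodic g T) : Periodic (deriv g) T := fun t => by
  rw [← deriv_comp_add_const, hg.funext]

lemma Function.Periodic.comp_intCast_mul {α : Type*} {f : ℝ → α} {T τ : ℝ} (hf : Periodic f T)
    {M : ℕ} (hMτ : M * τ = T) : Periodic (fun n : ℤ => f (n * τ)) M := fun n => by
  simp only [Int.cast_add, Int.cast_natCast, add_mul, hMτ, hf _]

section DqR

variable {X : Type*} [NormedAddCommGroup X] [NormedSpace ℝ X] {τ T : ℝ}

noncomputable def DqR (τ : ℝ) (g : ℝ → X) : ℝ → X := fun t => τ⁻¹ • (g t - g (t - τ))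

lemma iterate_DqZ_comp_mul (f : ℝ → X) (τ : ℝ) (k : ℕ) (n : ℤ) :
    (DqZ τ)^[k] (fun n : ℤ => f (n * τ)) n = (DqR τ)^[k] f (n * τ) := by
  induction k generalizing n with
  | zero => rfl
  | succ k ih =>
    simp only [iterate_succ_apply', DqZ, DqR, ih, Int.cast_sub, Int.cast_one, sub_mul, one_mul]

lemma periodic_DqR {g : ℝ → X} (hg : Periodic g T) (τ : ℝ) : Periodic (DqR τ g) T := fun t => by
  simp only [DqR]
  rw [hg, show t + T - τ = t - τ + T by ring, hg]

lemma periodic_iterate_DqR {g : ℝ → X} (hg : Periodic g T) (τ : ℝ) (k : ℕ) :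
    Periodic ((DqR τ)^[k] g) T :=
  Function.Iterate.rec (fun u => Periodic u T) hg (fun _ hu => periodic_DqR hu τ) k

lemma continuous_DqR {g : ℝ → X} (hg : Continuous g) (τ : ℝ) : Continuous (DqR τ g) :=
  (hg.sub (hg.comp (continuous_sub_right τ))).const_smul τ⁻¹

lemma continuous_iterate_DqR {g : ℝ → X} (hg : Continuous g) (τ : ℝ) (k : ℕ) :
    Continuous ((DqR τ)^[k] g) :=
  Function.Iterate.rec Continuous hg (fun _ h => continuous_DqR h τ) k

lemma hasDerivAt_iterate_DqR {g g' : ℝ → X} (hg : ∀ t, HasDerivAt g (g' t) t) (τ : ℝ) (k : ℕ)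
    (t : ℝ) : HasDerivAt ((DqR τ)^[k] g) ((DqR τ)^[k] g' t) t := by
  induction k generalizing t with
  | zero => exact hg t
  | succ k ih =>
    simp only [iterate_succ_apply']
    exact ((ih t).sub ((ih (t - τ)).comp_sub_const t τ)).const_smul τ⁻¹

variable [CompleteSpace X]

lemma sq_norm_DqR_le (hτ : 0 < τ) {g g' : ℝ → X} (hg : ∀ t, HasDerivAt g (g' t) t)
    (hg' : Continuous g') (t : ℝ) :
    ‖DqR τ g t‖ ^ 2 ≤ τ⁻¹ * ∫ u in (t - τ)..t, ‖g' u‖ ^ 2 := by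
  have hle : t - τ ≤ t := by linarith
  have hftc : ∫ u in (t - τ)..t, g' u = g t - g (t - τ) :=
    intervalIntegral.integral_eq_sub_of_hasDerivAt (fun u _ => hg u) (hg'.intervalIntegrable _ _)
  have hnorm : ‖DqR τ g t‖ ≤ τ⁻¹ * ∫ u in (t - τ)..t, ‖g' u‖ := by
    rw [DqR, norm_smul, Real.norm_of_nonneg (inv_nonneg.mpr hτ.le), ← hftc]
    exact mul_le_mul_of_nonneg_left (intervalIntegral.norm_integral_le_integral_norm hle)
      (inv_nonneg.mpr hτ.le)
  calc ‖DqR τ g t‖ ^ 2 ≤ (τ⁻¹ * ∫ u in (t - τ)..t, ‖g' u‖) ^ 2 :=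
        pow_le_pow_left₀ (norm_nonneg _) hnorm 2
    _ ≤ τ⁻¹ ^ 2 * (τ * ∫ u in (t - τ)..t, ‖g' u‖ ^ 2) := by
        rw [mul_pow]
        refine mul_le_mul_of_nonneg_left ?_ (sq_nonneg _)
        simpa using sq_intervalIntegral_le hg'.norm hle
    _ = τ⁻¹ * ∫ u in (t - τ)..t, ‖g' u‖ ^ 2 := by field_simp

lemma integral_sq_norm_DqR_le (hτ : 0 < τ) (hT : 0 ≤ T) {g g' : ℝ → X}
    (hg : ∀ t, HasDerivAt g (g' t) t) (hg' : Continuous g') (hper : Periodic g' T) :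
    ∫ t in (0 : ℝ)..T, ‖DqR τ g t‖ ^ 2 ≤ ∫ t in (0 : ℝ)..T, ‖g' t‖ ^ 2 := by
  have hp : Continuous fun u => ‖g' u‖ ^ 2 := hg'.norm.pow 2
  have hwindow : Continuous fun t => ∫ u in (t - τ)..t, ‖g' u‖ ^ 2 := by
    have hF := intervalIntegral.continuous_primitive (μ := volume)
      (fun _ _ => hp.intervalIntegrable _ _) 0
    exact (hF.sub (hF.comp (continuous_sub_right τ))).congr fun t =>
      intervalIntegral.integral_interval_sub_left (hp.intervalIntegrable _ _)
        (hp.intervalIntegrable _ _)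
  calc ∫ t in (0 : ℝ)..T, ‖DqR τ g t‖ ^ 2
      ≤ ∫ t in (0 : ℝ)..T, τ⁻¹ * ∫ u in (t - τ)..t, ‖g' u‖ ^ 2 :=
        intervalIntegral.integral_mono_on hT
          (((continuous_DqR (continuous_iff_continuousAt.mpr fun t => (hg t).continuousAt)
            τ).norm.pow 2).intervalIntegrable _ _)
          ((continuous_const.mul hwindow).intervalIntegrable _ _)
          fun t _ => sq_norm_DqR_le hτ hg hg' t
    _ = ∫ t in (0 : ℝ)..T, ‖g' t‖ ^ 2 := by
        rw [intervalIntegral.integral_const_mul,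
          (hper.comp fun x => ‖x‖ ^ 2).intervalIntegral_intervalIntegral_sub hp τ,
          inv_mul_cancel_left₀ hτ.ne']

lemma integral_sq_norm_iterate_DqR_le (hτ : 0 < τ) (hT : 0 ≤ T) (k : ℕ) {g : ℝ → X}
    (hg : ContDiff ℝ k g) (hper : Periodic g T) :
    ∫ t in (0 : ℝ)..T, ‖(DqR τ)^[k] g t‖ ^ 2 ≤ ∫ t in (0 : ℝ)..T, ‖iteratedDeriv k g t‖ ^ 2 := by
  induction k generalizing g with
  | zero => simp
  | succ k ih =>
    push_cast at hg
    obtain ⟨hdiff, -, hg'⟩ := contDiff_succ_iff_deriv.mp hg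
    rw [iterate_succ_apply', iteratedDeriv_succ']
    exact (integral_sq_norm_DqR_le hτ hT
      (hasDerivAt_iterate_DqR (fun t => (hdiff t).hasDerivAt) τ k)
      (continuous_iterate_DqR hg'.continuous τ k) (periodic_iterate_DqR hper.deriv τ k)).trans
      (ih hg' hper.deriv)

lemma mul_sum_sq_norm_DqR_le (hτ : 0 < τ) (M : ℕ) {g g' : ℝ → X}
    (hg : ∀ t, HasDerivAt g (g' t) t) (hg' : Continuous g') :
    τ * ∑ n ∈ Icc (1 : ℤ) M, ‖DqR τ g (n * τ)‖ ^ 2 ≤ ∫ t in (0 : ℝ)..M * τ, ‖g' t‖ ^ 2 := by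
  have hp : Continuous fun u => ‖g' u‖ ^ 2 := hg'.norm.pow 2
  calc τ * ∑ n ∈ Icc (1 : ℤ) M, ‖DqR τ g (n * τ)‖ ^ 2
      ≤ τ * ∑ k ∈ range M, τ⁻¹ * ∫ u in (k * τ)..((k + 1 : ℕ) * τ), ‖g' u‖ ^ 2 := by
        rw [Int.sum_Icc_one_eq_sum_range]
        refine mul_le_mul_of_nonneg_left (sum_le_sum fun k _ => ?_) hτ.le
        refine (le_of_eq ?_).trans ((sq_norm_DqR_le hτ hg hg' ((k + 1 : ℕ) * τ)).trans_eq ?_)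
        · push_cast; rfl
        · congr 2; push_cast; ring
    _ = ∫ t in (0 : ℝ)..M * τ, ‖g' t‖ ^ 2 := by
        rw [mul_sum]
        simp_rw [mul_inv_cancel_left₀ hτ.ne']
        simpa using intervalIntegral.sum_integral_adjacent_intervals (μ := volume)
          (a := fun k : ℕ => k * τ) (fun k _ => hp.intervalIntegrable _ _)

lemma sq_seqNorm0Z_iterate_DqZ_le (hτ : 0 < τ) {M : ℕ} (hMτ : M * τ = T) (k : ℕ) {f : ℝ → X}
    (hf : ContDiff ℝ (k + 1) f) (hper : Periodic f T) :
    seqNorm0Z τ M ((DqZ τ)^[k + 1] fun n : ℤ => f (n * τ)) ^ 2 ≤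
      ∫ t in (0 : ℝ)..T, ‖iteratedDeriv (k + 1) f t‖ ^ 2 := by
  obtain ⟨hdiff, -, hf'⟩ := contDiff_succ_iff_deriv.mp hf
  have hT : 0 ≤ T := hMτ ▸ mul_nonneg M.cast_nonneg hτ.le
  rw [sq_seqNorm0Z hτ.le, iteratedDeriv_succ', ← hMτ]
  simp only [iterate_DqZ_comp_mul, iterate_succ_apply']
  exact (mul_sum_sq_norm_DqR_le hτ M
    (hasDerivAt_iterate_DqR (fun t => (hdiff t).hasDerivAt) τ k)
    (continuous_iterate_DqR hf'.continuous τ k)).trans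
    (hMτ ▸ integral_sq_norm_iterate_DqR_le hτ hT k hf' hper.deriv)

end DqR

theorem seqNorm0Z_DqZ_le {X : Type*} [NormedAddCommGroup X] [InnerProductSpace ℝ X]
    [CompleteSpace X] {τ T : ℝ} {M : ℕ} {f : ℝ → X} (hτ : 0 < τ) (hMτ : M * τ = T) {m : ℕ}
    (hm : 1 ≤ m) (hf : ContDiff ℝ m f) (hper : Periodic f T) :
    seqNorm0Z τ M (DqZ τ fun n : ℤ => f (n * τ)) ≤
      seqNorm0Z τ M (fun n : ℤ => f (n * τ)) ^ (((m : ℝ) - 1) / m) *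
        (∫ t in (0 : ℝ)..T, ‖iteratedDeriv m f t‖ ^ 2) ^ (1 / (2 * (m : ℝ))) := by
  obtain ⟨k, rfl⟩ : ∃ k, m = k + 1 := ⟨m - 1, by omega⟩
  set s := fun n : ℤ => f (n * τ)
  have hs : Periodic s M := hper.comp_intCast_mul hMτ
  have hI := sq_seqNorm0Z_iterate_DqZ_le hτ hMτ k (by exact_mod_cast hf) hper
  have hI0 : 0 ≤ ∫ t in (0 : ℝ)..T, ‖iteratedDeriv (k + 1) f t‖ ^ 2 :=
    (sq_nonneg _).trans hI
  have hpow := (seqNorm0Z_DqZ_pow_le hτ hs k).trans (mul_le_mul_of_nonneg_left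
    (Real.le_sqrt_of_sq_le hI) (pow_nonneg (seqNorm0Z_nonneg s) k))
  refine (le_rpow_mul_rpow_of_pow_le (seqNorm0Z_nonneg _) (seqNorm0Z_nonneg _)
    (Real.sqrt_nonneg _) (by omega) (by simpa using hpow)).trans_eq ?_
  rw [Real.sqrt_eq_rpow, ← Real.rpow_mul hI0]
  congr 2
  ring

theorem periodic_function_values_bounds_general
    {X : Type*} [NormedAddCommGroup X] [InnerProductSpace ℝ X] [CompleteSpace X]
    (T : ℝ) (hT : 0 < T) (M : ℕ) (hM : 0 < M) (τ : ℝ) (hτ : τ = T / M)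
    (m : ℕ) (hm : 1 ≤ m)
    (f : ℝ → X) (hper : ∀ t : ℝ, f (t + T) = f t) (hf : ContDiff ℝ (m : ℕ∞) f)
    (s : ℤ → X) (hs : s = fun n : ℤ => f ((n : ℝ) * τ)) :
    (seqNorm0Z τ M (DqZ τ s) ≤
      2 ^ (((m:ℝ)-1)/(m:ℝ)) * (m:ℝ) ^ (1/(m:ℝ)) *
        (seqNorm0Z τ M s) ^ (((m:ℝ)-1)/(m:ℝ)) *
        (∫ t in (0:ℝ)..T, ‖iteratedDeriv m f t‖^2) ^ (1/(2*(m:ℝ))))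
    ∧ (∀ n : ℤ, 1 ≤ n → n ≤ (M:ℤ) →
        ‖s n‖ ≤ 2 ^ (((m:ℝ)-1)/(2*(m:ℝ))) * (m:ℝ) ^ (1/(2*(m:ℝ))) * cA *
          (seqNorm0Z τ M s) ^ (1 - 1/(2*(m:ℝ))) *
          (∫ t in (0:ℝ)..T, ‖iteratedDeriv m f t‖^2) ^ (1/(4*(m:ℝ)))
          + seqNorm0Z τ M s / Real.sqrt T)
    ∧ ((∑ n ∈ Finset.Icc (1:ℤ) (M:ℤ), s n = 0) →
        ∀ n : ℤ, 1 ≤ n → n ≤ (M:ℤ) →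
          ‖s n‖ ≤ 2 ^ (((m:ℝ)-1)/(2*(m:ℝ))) * (m:ℝ) ^ (1/(2*(m:ℝ))) * cA *
            (seqNorm0Z τ M s) ^ (1 - 1/(2*(m:ℝ))) *
            (∫ t in (0:ℝ)..T, ‖iteratedDeriv m f t‖^2) ^ (1/(4*(m:ℝ)))) := by
  have hτ0 : 0 < τ := by rw [hτ]; positivity
  have hMτ : (M : ℝ) * τ = T := by rw [hτ]; field_simp
  have hm1 : (1 : ℝ) ≤ m := by exact_mod_cast hm
  have hsper : Periodic s M := hs ▸ Periodic.comp_intCast_mul hper hMτ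
  have hD : seqNorm0Z τ M (DqZ τ s) ≤ seqNorm0Z τ M s ^ (((m : ℝ) - 1) / m) *
      (∫ t in (0 : ℝ)..T, ‖iteratedDeriv m f t‖ ^ 2) ^ (1 / (2 * (m : ℝ))) :=
    hs ▸ seqNorm0Z_DqZ_le hτ0 hMτ hm hf hper
  have hI : 0 ≤ ∫ t in (0 : ℝ)..T, ‖iteratedDeriv m f t‖ ^ 2 :=
    intervalIntegral.integral_nonneg hT.le fun _ _ => sq_nonneg _
  have hN : 0 ≤ seqNorm0Z τ M s := seqNorm0Z_nonneg s
  have hND := sqrt_mul_le_rpow_mul_rpow hN hI hm1 hD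
  have hC₁ := one_le_two_rpow_mul_rpow hm1 (a := ((m : ℝ) - 1) / m) (b := 1 / m)
    (by positivity) (by positivity)
  have hC₂ := one_le_two_rpow_mul_rpow hm1 (a := ((m : ℝ) - 1) / (2 * m)) (b := 1 / (2 * m))
    (by positivity) (by positivity)
  have hcA : 0 ≤ cA := zero_le_one.trans one_le_cA
  refine ⟨?_, fun n h1 h2 => ?_, fun hz n h1 h2 => ?_⟩
  · simpa only [mul_assoc] using hD.trans (le_mul_of_one_le_left (by positivity) hC₁)
  · simpa only [mul_assoc, mul_comm τ, hMτ] using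
      (norm_le_of_periodic hτ0 hsper (mem_Icc.mpr ⟨h1, h2⟩)).trans (add_le_add
        (hND.trans (le_mul_of_one_le_left (by positivity)
          (one_le_mul_of_one_le_of_one_le hC₂ one_le_cA))) le_rfl)
  · simpa only [mul_assoc] using
      (norm_le_of_periodic_of_sum_eq_zero hτ0 hsper hz (mem_Icc.mpr ⟨h1, h2⟩)).trans
        ((mul_le_mul sqrt_two_le_cA hND (Real.sqrt_nonneg _) hcA).trans
          (le_mul_of_one_le_left (by positivity) hC₂))

/-- Theorem 4.9: bounds for the sequence of values of a `T`-periodic function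
in `H^m(0,T,X)`: an interpolation bound for the difference quotients and a
pointwise (Agmon-type) bound, whose last term can be dropped for zero-mean data. -/
theorem periodic_function_values_bounds
    {X : Type*} [NormedAddCommGroup X] [InnerProductSpace ℝ X] [CompleteSpace X]
    (T : ℝ) (hT : 0 < T) (M : ℕ) (hM : 0 < M) (τ : ℝ) (hτ : τ = T / M)
    (m : ℕ) (hm : 1 ≤ m) (hmM : m ≤ M - 1)
    (f : ℝ → X) (hper : ∀ t : ℝ, f (t + T) = f t) (hf : ContDiff ℝ (m : ℕ∞) f)
    (s : ℤ → X) (hs : s = fun n : ℤ => f ((n : ℝ) * τ)) :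
    (seqNorm0Z τ M (DqZ τ s) ≤
      2 ^ (((m:ℝ)-1)/(m:ℝ)) * (m:ℝ) ^ (1/(m:ℝ)) *
        (seqNorm0Z τ M s) ^ (((m:ℝ)-1)/(m:ℝ)) *
        (∫ t in (0:ℝ)..T, ‖iteratedDeriv m f t‖^2) ^ (1/(2*(m:ℝ))))
    ∧ (∀ n : ℤ, 1 ≤ n → n ≤ (M:ℤ) →
        ‖s n‖ ≤ 2 ^ (((m:ℝ)-1)/(2*(m:ℝ))) * (m:ℝ) ^ (1/(2*(m:ℝ))) * cA *
          (seqNorm0Z τ M s) ^ (1 - 1/(2*(m:ℝ))) *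
          (∫ t in (0:ℝ)..T, ‖iteratedDeriv m f t‖^2) ^ (1/(4*(m:ℝ)))
          + seqNorm0Z τ M s / Real.sqrt T)
    ∧ ((∑ n ∈ Finset.Icc (1:ℤ) (M:ℤ), s n = 0) →
        ∀ n : ℤ, 1 ≤ n → n ≤ (M:ℤ) →
          ‖s n‖ ≤ 2 ^ (((m:ℝ)-1)/(2*(m:ℝ))) * (m:ℝ) ^ (1/(2*(m:ℝ))) * cA *
            (seqNorm0Z τ M s) ^ (1 - 1/(2*(m:ℝ))) *
            (∫ t in (0:ℝ)..T, ‖iteratedDeriv m f t‖^2) ^ (1/(4*(m:ℝ)))) :=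
  periodic_function_values_bounds_general T hT M hM τ hτ m hm f hper hf s hs
end
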